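/- arXiv:1808.08486 — 11 statements merged into one kernel-verified Lean document; each statement's English description precedes it below -/
import Mathlib

section
/- If d divides n and J is a zero-sum sequence in ℤ/nℤ of length 2n - d, then J contains a zero-sum subsequence of length n. -/
open Multiset

-- preimage lemma
lemma exists_preimage {α β : Type*} (f : α → β) :
    ∀ (J : Multiset α) (t : Multiset β), t ≤ J.map f → ∃ S ≤ J, S.map f = t := by
  intro J
  induction J using Multiset.induction with
  | empty => intro t ht; simp at ht; exact ⟨0, le_refl _, by simp [ht]⟩
  | cons a J ih =>
    intro t ht
    rw [Multiset.map_cons] at ht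
    by_cases h : f a ∈ t
    · obtain ⟨t', rfl⟩ := Multiset.exists_cons_of_mem h
      have : t' ≤ J.map f := by
        have := Multiset.cons_le_cons_iff (f a) (s := t') (t := J.map f)
        exact this.mp ht
      obtain ⟨S, hS, hSm⟩ := ih t' this
      exact ⟨a ::ₘ S, Multiset.cons_le_cons a hS, by simp [hSm]⟩
    · have : t ≤ J.map f := (Multiset.le_cons_of_notMem h).mp ht
      obtain ⟨S, hS, hSm⟩ := ih t this
      exact ⟨S, hS.trans (Multiset.le_cons_self J a), hSm⟩

lemma join_sum (C : Multiset (Multiset ℤ)) : C.sum.sum = (C.map Multiset.sum).sum := by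
  induction C using Multiset.induction with
  | empty => simp
  | cons a C ih => simp [ih]

lemma join_card (C : Multiset (Multiset ℤ)) : card C.sum = (C.map card).sum := by
  induction C using Multiset.induction with
  | empty => simp
  | cons a C ih => simp [ih]

lemma msum_mono {C' C : Multiset (Multiset ℤ)} (h : C' ≤ C) : C'.sum ≤ C.sum := by
  obtain ⟨E, rfl⟩ := Multiset.le_iff_exists_add.mp h
  simp

-- partition into blocks
lemma partition_blocks (p : ℕ) (hp : p.Prime) :
    ∀ (t : ℕ) (J : Multiset ℤ), card J = p * t → (p : ℤ) ∣ J.sum →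
    ∃ C : Multiset (Multiset ℤ), C.sum = J ∧ card C = t ∧
      ∀ B ∈ C, card B = p ∧ (p : ℤ) ∣ B.sum := by
  intro t
  induction t with
  | zero =>
    intro J hc _
    have : J = 0 := by
      rw [← Multiset.card_eq_zero]; omega
    exact ⟨0, by simp [this], by simp, by simp⟩
  | succ t ih =>
    intro J hc hs
    rcases Nat.eq_zero_or_pos t with rfl | ht
    · exact ⟨{J}, by simp, by simp, by intro B hB; simp at hB; subst hB; exact ⟨by omega, hs⟩⟩
    · have hc' : card J = p * t + p := by rw [hc]; ring
      have hpt : p ≤ p * t := Nat.le_mul_of_pos_right p ht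
      have h2p : 2 * p - 1 ≤ card J := by
        have := hp.two_le; omega
      obtain ⟨B, hBJ, hBc, hBs⟩ := Int.erdos_ginzburg_ziv_multiset (n := p) J h2p
      obtain ⟨R, hR⟩ := Multiset.le_iff_exists_add.mp hBJ
      have hRc : card R = p * t := by
        have := congrArg card hR; simp at this; omega
      have hRs : (p : ℤ) ∣ R.sum := by
        have : J.sum = B.sum + R.sum := by rw [hR]; simp
        have h2 : R.sum = J.sum - B.sum := by omega
        rw [h2]; exact dvd_sub hs hBs
      obtain ⟨C, hC1, hC2, hC3⟩ := ih R hRc hRs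
      refine ⟨B ::ₘ C, by simp [hC1, hR], by simp [hC2], ?_⟩
      intro B' hB'
      rcases Multiset.mem_cons.mp hB' with rfl | h
      · exact ⟨hBc, hBs⟩
      · exact hC3 B' h

-- main integer version
lemma key : ∀ n, ∀ d, 0 < n → 0 < d → d ∣ n → ∀ J : Multiset ℤ,
    card J = 2 * n - d → (n : ℤ) ∣ J.sum →
    ∃ S ≤ J, card S = n ∧ (n : ℤ) ∣ S.sum := by
  intro n
  induction n using Nat.strong_induction_on with
  | _ n IH =>
    intro d hn hd hdn J hc hs
    have hdle : d ≤ n := Nat.le_of_dvd hn hdn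
    rcases eq_or_lt_of_le hdle with rfl | hdlt
    · exact ⟨J, le_refl _, by omega, hs⟩
    rcases Nat.eq_or_lt_of_le hd with h1 | h1
    · -- d = 1 : EGZ
      have : 2 * n - 1 ≤ card J := by omega
      exact Int.erdos_ginzburg_ziv_multiset J this
    · -- 1 < d : take prime p ∣ d
      set p := d.minFac with hpdef
      have hp : p.Prime := Nat.minFac_prime (by omega)
      have hpd : p ∣ d := Nat.minFac_dvd d
      obtain ⟨d', hd'⟩ := hpd
      obtain ⟨m, hm⟩ : p ∣ n := dvd_trans (Nat.minFac_dvd d) hdn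
      have hp2 := hp.two_le
      have hd'pos : 0 < d' := by nlinarith
      have hmpos : 0 < m := by nlinarith
      have hd'm : d' ∣ m := by
        obtain ⟨k, hk⟩ := hdn
        refine ⟨k, ?_⟩
        have : p * m = p * (d' * k) := by rw [← hm, hk, hd']; ring
        exact Nat.eq_of_mul_eq_mul_left (by omega) this
      have hd'le : d' ≤ m := Nat.le_of_dvd hmpos hd'm
      -- card J = p * (2*m - d')
      have hcard : card J = p * (2 * m - d') := by
        rw [hc, hm, hd', Nat.mul_sub]
        congr 1 <;> ring
      have hpsum : (p : ℤ) ∣ J.sum := by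
        refine dvd_trans ?_ hs
        exact_mod_cast Int.natCast_dvd_natCast.mpr ⟨m, hm⟩
      obtain ⟨C, hC1, hC2, hC3⟩ := partition_blocks p hp (2 * m - d') J hcard hpsum
      -- block values
      set D : Multiset ℤ := C.map (fun B => B.sum / p) with hD
      have hDc : card D = 2 * m - d' := by simp [hD, hC2]
      have hpD : ∀ B ∈ C, (p : ℤ) * (B.sum / p) = B.sum := by
        intro B hB
        exact Int.mul_ediv_cancel' (hC3 B hB).2
      have hDsum : (p : ℤ) * D.sum = J.sum := by
        have e1 : C.map Multiset.sum = C.map (fun B => (p : ℤ) * (B.sum / p)) :=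
          Multiset.map_congr rfl (fun B hB => (hpD B hB).symm)
        rw [← hC1, join_sum, e1, Multiset.sum_map_mul_left, hD]
      have hmD : (m : ℤ) ∣ D.sum := by
        obtain ⟨k, hk⟩ := hs
        refine ⟨k, ?_⟩
        have hpne : (p : ℤ) ≠ 0 := by exact_mod_cast (by omega : p ≠ 0)
        have : (p : ℤ) * D.sum = (p : ℤ) * ((m : ℤ) * k) := by
          rw [hDsum, hk, hm]; push_cast; ring
        exact mul_left_cancel₀ hpne this
      obtain ⟨E, hED, hEc, hEs⟩ := IH m (by nlinarith) d' hmpos hd'pos hd'm D hDc hmD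
      obtain ⟨C', hC'C, hC'E⟩ := exists_preimage (fun B : Multiset ℤ => B.sum / (p : ℤ)) C E hED
      refine ⟨C'.sum, ?_, ?_, ?_⟩
      · rw [← hC1]; exact msum_mono hC'C
      · rw [join_card]
        have : C'.map card = C'.map (fun _ => p) := by
          apply Multiset.map_congr rfl
          intro B hB
          exact (hC3 B (Multiset.mem_of_le hC'C hB)).1
        rw [this]
        simp only [Multiset.map_const', Multiset.sum_replicate, smul_eq_mul]
        have : card C' = m := by rw [← hEc, ← hC'E]; simp
        rw [this, hm]; ring
      · obtain ⟨k, hk⟩ := hEs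
        refine ⟨k, ?_⟩
        rw [join_sum]
        have e1 : C'.map Multiset.sum = C'.map (fun B => (p : ℤ) * (B.sum / p)) :=
          Multiset.map_congr rfl
            (fun B hB => (hpD B (Multiset.mem_of_le hC'C hB)).symm)
        have : (C'.map Multiset.sum).sum = (p : ℤ) * E.sum := by
          rw [e1, Multiset.sum_map_mul_left, ← hC'E]
        rw [this, hk, hm]; push_cast; ring

theorem cyclic_upper (n d : ℕ) (hn : 0 < n) (hd : 0 < d) (hdn : d ∣ n)
    (J : Multiset (ZMod n)) (hJ : Multiset.card J = 2 * n - d) (hsum : J.sum = 0) :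
    ∃ S ≤ J, Multiset.card S = n ∧ S.sum = 0 := by
  haveI : NeZero n := ⟨hn.ne'⟩
  set f : ZMod n → ℤ := fun x => (x.val : ℤ) with hf
  have hcast : ∀ T : Multiset (ZMod n), (((T.map f).sum : ℤ) : ZMod n) = T.sum := by
    intro T
    induction T using Multiset.induction with
    | empty => simp
    | cons a T ih => simp [hf, ih, ZMod.natCast_val, ZMod.cast_id]
  have hc : card (J.map f) = 2 * n - d := by simp [hJ]
  have hds : (n : ℤ) ∣ (J.map f).sum := by
    rw [← ZMod.intCast_zmod_eq_zero_iff_dvd, hcast, hsum]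
  obtain ⟨S', hS'J, hS'c, hS's⟩ := key n d hn hd hdn (J.map f) hc hds
  obtain ⟨S, hSJ, hSm⟩ := exists_preimage f J S' hS'J
  refine ⟨S, hSJ, ?_, ?_⟩
  · have : card (S.map f) = card S' := by rw [hSm]
    simpa using this.trans hS'c
  · have := (ZMod.intCast_zmod_eq_zero_iff_dvd S'.sum n).mpr hS's
    rw [← hSm, hcast] at this
    exact this
end

section
/- Let ℓ be the smallest positive integer such that ℓ does not divide n, and let t ≥ 1. If J is a zero-sum sequence in ℤ/nℤ of length at least (t+1)n - ℓ + 1, then J contains a zero-sum subsequence of length nt. -/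
/-!
When `|J| ≥ 2n - 1` the Erdős–Ginzburg–Ziv theorem applies directly. Otherwise `|J| = 2n - d`
with `1 < d < ℓ`, so `d ∣ n`, say `n = d * m`. Repeated EGZ in `ℤ/dℤ` splits `J` into `2m - 1`
blocks of length `d` whose sums are divisible by `d` (the last block because the total sum is),
and EGZ in `ℤ/mℤ`, applied to the block sums divided by `d`, selects `m` blocks whose union has
sum divisible by `d * m = n`. So every zero-sum `J` with `|J| ≥ 2n + 1 - ℓ` has a zero-sum
subsequence of length `n`; removing such subsequences one after another gives length `n * t`.
-/

open Multiset

theorem Multiset.exists_le_map_eq_of_le_map {α β : Type*} {f : α → β} {s : Multiset α}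
    {t : Multiset β} (h : t ≤ s.map f) : ∃ u ≤ s, u.map f = t := by
  induction s using Quotient.inductionOn
  induction t using Quotient.inductionOn
  obtain ⟨w, hw, hws⟩ := h
  obtain ⟨u, hu, rfl⟩ := List.sublist_map_iff.mp hws
  exact ⟨u, hu.subperm, Quotient.sound hw⟩

theorem Multiset.exists_le_card_eq_mul_sum_eq_zero {α : Type*} [AddCommMonoid α] {n N : ℕ}
    (hstep : ∀ s : Multiset α, n + N ≤ card s → s.sum = 0 → ∃ t ≤ s, card t = n ∧ t.sum = 0) :
    ∀ (k : ℕ) (s : Multiset α), k * n + N ≤ card s → s.sum = 0 →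
      ∃ t ≤ s, card t = n * k ∧ t.sum = 0
  | 0, s, _, _ => ⟨0, zero_le s, by simp, sum_zero⟩
  | k + 1, s, hs, hsum => by
    rw [add_mul, one_mul] at hs
    obtain ⟨B, hBs, hBcard, hBsum⟩ := hstep s (by omega) hsum
    obtain ⟨R, rfl⟩ := Multiset.le_iff_exists_add.mp hBs
    rw [sum_add, hBsum, zero_add] at hsum
    rw [card_add, hBcard] at hs
    obtain ⟨T, hTR, hTcard, hTsum⟩ := exists_le_card_eq_mul_sum_eq_zero hstep k R (by omega) hsum
    refine ⟨B + T, add_le_add_right hTR B, ?_, by rw [sum_add, hBsum, hTsum, add_zero]⟩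
    rw [card_add, hBcard, hTcard]
    ring

namespace Int

theorem exists_le_card_eq_dvd_sum_of_card_eq_mul {k d : ℕ} {s : Multiset ℤ}
    (hs : card s = (k + 1) * d) (hsum : (d : ℤ) ∣ s.sum) :
    ∃ B ≤ s, card B = d ∧ (d : ℤ) ∣ B.sum := by
  rcases k with _ | k
  · exact ⟨s, le_rfl, by simpa using hs, hsum⟩
  · exact erdos_ginzburg_ziv_multiset s
      (hs ▸ (Nat.sub_le _ _).trans (Nat.mul_le_mul_right d (by omega)))

theorem exists_partition_card_eq_dvd_sum {d : ℕ} :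
    ∀ {k : ℕ} {s : Multiset ℤ}, card s = k * d → (d : ℤ) ∣ s.sum →
      ∃ P : Multiset (Multiset ℤ), P.join = s ∧ card P = k ∧
        ∀ B ∈ P, card B = d ∧ (d : ℤ) ∣ B.sum
  | 0, s, hs, _ => ⟨0, by simpa [eq_comm] using hs, rfl, by simp⟩
  | k + 1, s, hs, hsum => by
    obtain ⟨B, hBs, hBcard, hBsum⟩ := exists_le_card_eq_dvd_sum_of_card_eq_mul hs hsum
    obtain ⟨R, rfl⟩ := Multiset.le_iff_exists_add.mp hBs
    obtain ⟨P, rfl, hPcard, hP⟩ := exists_partition_card_eq_dvd_sum (d := d) (k := k) (s := R)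
      (by rw [card_add, hBcard, add_mul, one_mul] at hs; omega)
      ((dvd_add_right hBsum).mp (sum_add B R ▸ hsum))
    refine ⟨B ::ₘ P, by rw [join_cons], by rw [card_cons, hPcard], ?_⟩
    simpa [forall_eq_or_imp] using ⟨⟨hBcard, hBsum⟩, hP⟩

theorem erdos_ginzburg_ziv_multiset_of_card_eq_two_mul_sub {n d : ℕ} (hdn : d ∣ n)
    (s : Multiset ℤ) (hs : card s = 2 * n - d) (hsum : (d : ℤ) ∣ s.sum) :
    ∃ t ≤ s, card t = n ∧ (n : ℤ) ∣ t.sum := by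
  obtain ⟨m, rfl⟩ := hdn
  have hs' : card s = (2 * m - 1) * d := by rw [hs, Nat.sub_mul]; ring_nf
  obtain ⟨P, rfl, hPcard, hP⟩ := exists_partition_card_eq_dvd_sum hs' hsum
  obtain ⟨V, hVP, hVcard, hVsum⟩ :=
    erdos_ginzburg_ziv_multiset (P.map fun B ↦ B.sum / d) (by rw [card_map, hPcard])
  obtain ⟨U, hUP, rfl⟩ := Multiset.exists_le_map_eq_of_le_map hVP
  have hU : ∀ B ∈ U, card B = d ∧ (d : ℤ) ∣ B.sum := fun B hB ↦ hP B (mem_of_le hUP hB)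
  refine ⟨U.join, ?_, ?_, ?_⟩
  · obtain ⟨W, rfl⟩ := Multiset.le_iff_exists_add.mp hUP
    rw [join_add]
    exact Multiset.le_add_right _ _
  · rw [card_join, map_congr rfl fun B hB ↦ (hU B hB).1, map_const', sum_replicate, smul_eq_mul,
      ← card_map, hVcard, mul_comm]
  · have hsplit : U.map Multiset.sum = U.map fun B ↦ (d : ℤ) * (B.sum / d) :=
      map_congr rfl fun B hB ↦ (Int.mul_ediv_cancel' (hU B hB).2).symm
    rw [sum_join, hsplit, sum_map_mul_left, Nat.cast_mul]
    exact mul_dvd_mul_left _ hVsum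

end Int

theorem ZMod.erdos_ginzburg_ziv_multiset_of_card_eq_two_mul_sub {n d : ℕ} (hdn : d ∣ n)
    (s : Multiset (ZMod n)) (hs : Multiset.card s = 2 * n - d) (hsum : s.sum = 0) :
    ∃ t ≤ s, Multiset.card t = n ∧ t.sum = 0 := by
  have hcast : ∀ u : Multiset (ZMod n), ((u.map (cast : ZMod n → ℤ)).sum : ZMod n) = u.sum := by
    intro u
    simp [Int.cast_multiset_sum]
  have hdvd : (d : ℤ) ∣ (s.map cast).sum := by
    refine (Int.natCast_dvd_natCast.mpr hdn).trans ?_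
    rw [← ZMod.intCast_zmod_eq_zero_iff_dvd, hcast, hsum]
  obtain ⟨t', ht's, htcard, htsum⟩ := Int.erdos_ginzburg_ziv_multiset_of_card_eq_two_mul_sub hdn
    (s.map cast) (by rw [card_map, hs]) hdvd
  obtain ⟨t, hts, rfl⟩ := Multiset.exists_le_map_eq_of_le_map ht's
  refine ⟨t, hts, by rwa [card_map] at htcard, ?_⟩
  rwa [← hcast, ZMod.intCast_zmod_eq_zero_iff_dvd]

theorem ZMod.exists_le_card_eq_sum_eq_zero_of_forall_dvd {n ℓ : ℕ}
    (hℓ : ∀ d, 0 < d → d < ℓ → d ∣ n) (s : Multiset (ZMod n))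
    (hs : 2 * n + 1 - ℓ ≤ Multiset.card s) (hsum : s.sum = 0) :
    ∃ t ≤ s, Multiset.card t = n ∧ t.sum = 0 := by
  by_cases hlong : 2 * n - 1 ≤ Multiset.card s
  · exact erdos_ginzburg_ziv_multiset s hlong
  · exact erdos_ginzburg_ziv_multiset_of_card_eq_two_mul_sub
      (hℓ (2 * n - Multiset.card s) (by omega) (by omega)) s (by omega) hsum

theorem cyclic_upper_t_general (n ℓ t : ℕ) (hn : 0 < n)
    (hℓ : IsLeast {m : ℕ | 0 < m ∧ ¬ m ∣ n} ℓ)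
    (J : Multiset (ZMod n)) (hJ : (t + 1) * n - ℓ + 1 ≤ Multiset.card J)
    (hsum : J.sum = 0) :
    ∃ S ≤ J, Multiset.card S = n * t ∧ S.sum = 0 := by
  have hdvd : ∀ d, 0 < d → d < ℓ → d ∣ n := fun d hd hdℓ ↦
    by_contra fun hnd ↦ (hℓ.2 ⟨hd, hnd⟩).not_gt hdℓ
  have hℓn : ℓ ≤ n + 1 := hℓ.2 ⟨n.succ_pos, Nat.not_dvd_of_pos_of_lt hn n.lt_succ_self⟩
  refine Multiset.exists_le_card_eq_mul_sum_eq_zero (N := n + 1 - ℓ)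
    (fun s hs ↦ ZMod.exists_le_card_eq_sum_eq_zero_of_forall_dvd hdvd s (by omega)) t J ?_ hsum
  rw [add_mul, one_mul] at hJ
  omega

theorem cyclic_upper_t (n ℓ t : ℕ) (hn : 0 < n) (ht : 1 ≤ t)
    (hℓ : IsLeast {m : ℕ | 0 < m ∧ ¬ m ∣ n} ℓ)
    (J : Multiset (ZMod n)) (hJ : (t + 1) * n - ℓ + 1 ≤ Multiset.card J)
    (hsum : J.sum = 0) :
    ∃ S ≤ J, Multiset.card S = n * t ∧ S.sum = 0 :=
  cyclic_upper_t_general n ℓ t hn hℓ J hJ hsum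
end

section
/- Suppose ℓ does not divide n and t ≥ 1. Then there exists a zero-sum sequence in ℤ/nℤ of length (t+1)n - ℓ which contains no zero-sum subsequence of length nt. -/
theorem cyclic_construction (n ℓ t : ℕ) (hn : 0 < n) (hℓ : 0 < ℓ) (ht : 1 ≤ t)
    (hndvd : ¬ ℓ ∣ n) :
    ∃ J : Multiset (ZMod n), Multiset.card J = (1 + t) * n - ℓ ∧ J.sum = 0 ∧
      ¬ ∃ S ≤ J, Multiset.card S = n * t ∧ S.sum = 0 := by
  have hnt : n ≤ n * t := Nat.le_mul_of_pos_right n ht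
  have hexp : (1 + t) * n = n + n * t := by ring
  rcases lt_or_ge n ℓ with hcase | hcase
  · -- trivial case : the sequence is too short to contain a subsequence of length n*t
    refine ⟨Multiset.replicate ((1 + t) * n - ℓ) 0, by simp, by simp, ?_⟩
    rintro ⟨S, hS, hcard, -⟩
    have h1 := Multiset.card_le_card hS
    rw [hcard, Multiset.card_replicate] at h1
    omega
  · have hlt : ℓ < n := lt_of_le_of_ne hcase (fun h => hndvd (h ▸ dvd_refl ℓ))
    have hl2 : 2 ≤ ℓ := by
      rcases Nat.lt_or_ge ℓ 2 with h | h
      · interval_cases ℓ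
        · exact absurd (Nat.one_dvd n) hndvd
      · exact h
    set g := Nat.gcd ℓ n with hg
    have hgpos : 0 < g := Nat.gcd_pos_of_pos_left _ hℓ
    have hgl : g ∣ ℓ := Nat.gcd_dvd_left ℓ n
    have hgn : g ∣ n := Nat.gcd_dvd_right ℓ n
    have hglt : g < ℓ := lt_of_le_of_ne (Nat.le_of_dvd hℓ hgl)
      (fun h => hndvd (h ▸ hgn))
    set n₁ := n / g with hn₁def
    set ℓ₁ := ℓ / g with hℓ₁def
    have hn1 : g * n₁ = n := Nat.mul_div_cancel' hgn
    have hl1 : g * ℓ₁ = ℓ := Nat.mul_div_cancel' hgl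
    have hcop : Nat.Coprime ℓ₁ n₁ := Nat.coprime_div_gcd_div_gcd hgpos
    have hn1pos : 0 < n₁ := Nat.div_pos (Nat.le_of_dvd hn hgn) hgpos
    have hn1dvd : n₁ ∣ n := Nat.div_dvd_of_dvd hgn
    haveI : NeZero n := ⟨hn.ne'⟩
    haveI : NeZero n₁ := ⟨hn1pos.ne'⟩
    have hUnit : IsUnit ((ℓ₁ : ZMod n₁)) := (ZMod.isUnit_iff_coprime ℓ₁ n₁).mpr hcop
    obtain ⟨u, hu⟩ := ZMod.unitsMap_surjective hn1dvd (-hUnit.unit)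
    -- key congruence : g * u = -ℓ in ZMod n
    have hu' : ZMod.castHom hn1dvd (ZMod n₁) ((u : ZMod n)) = -(ℓ₁ : ZMod n₁) := by
      have := congrArg (Units.val) hu
      rw [ZMod.unitsMap_def] at this
      simpa using this
    have hval : (((u : ZMod n).val : ℕ) : ZMod n₁) = -(ℓ₁ : ZMod n₁) := by
      rw [← hu']
      have : ((u : ZMod n).val : ZMod n) = (u : ZMod n) := by
        simp [ZMod.natCast_val, ZMod.cast_id]
      conv_rhs => rw [← this]
      rw [map_natCast]
    have hdvd1 : n₁ ∣ (u : ZMod n).val + ℓ₁ := by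
      rw [← ZMod.natCast_eq_zero_iff]
      push_cast
      rw [hval]
      ring
    have hdvd2 : n ∣ g * ((u : ZMod n).val + ℓ₁) := by
      have h2 : g * n₁ ∣ g * ((u : ZMod n).val + ℓ₁) := Nat.mul_dvd_mul_left g hdvd1
      rwa [hn1] at h2
    have hkey : (g : ZMod n) * (u : ZMod n) = -(ℓ : ZMod n) := by
      have h0 : ((g * ((u : ZMod n).val + ℓ₁) : ℕ) : ZMod n) = 0 :=
        (ZMod.natCast_eq_zero_iff _ _).mpr hdvd2
      push_cast at h0
      have hv : ((u : ZMod n).val : ZMod n) = (u : ZMod n) := by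
        simp [ZMod.natCast_val, ZMod.cast_id]
      rw [hv] at h0
      have hll : (g : ZMod n) * (ℓ₁ : ZMod n) = (ℓ : ZMod n) := by
        rw [← Nat.cast_mul, hl1]
      linear_combination h0 - hll
    -- the construction
    set b : ZMod n := (u : ZMod n) + 1 with hb
    set α := n * t - ℓ + g with hα
    set β := n - g with hβ
    refine ⟨Multiset.replicate α 1 + Multiset.replicate β b, ?_, ?_, ?_⟩
    · simp only [Multiset.card_add, Multiset.card_replicate]
      omega
    · rw [Multiset.sum_add, Multiset.sum_replicate, Multiset.sum_replicate,
        nsmul_eq_mul, nsmul_eq_mul, mul_one]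
      have hαc : (α : ZMod n) = -(ℓ : ZMod n) + g := by
        have : α = n * t - ℓ + g := rfl
        rw [this, Nat.cast_add, Nat.cast_sub (le_of_lt (lt_of_lt_of_le hlt hnt))]
        push_cast
        simp
      have hβc : (β : ZMod n) = -(g : ZMod n) := by
        rw [hβ, Nat.cast_sub (le_of_lt (lt_trans hglt hlt))]
        simp
      rw [hαc, hβc, hb]
      ring_nf
      linear_combination -hkey
    · rintro ⟨S, hS, hScard, hSsum⟩
      set T := (Multiset.replicate α 1 + Multiset.replicate β b) - S with hT
      have hTle : T ≤ Multiset.replicate α 1 + Multiset.replicate β b := tsub_le_self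
      have hTS : T + S = Multiset.replicate α 1 + Multiset.replicate β b :=
        tsub_add_cancel_of_le hS
      have hTcard : Multiset.card T = n - ℓ := by
        have := congrArg Multiset.card hTS
        simp only [Multiset.card_add, Multiset.card_replicate, hScard] at this
        omega
      have hTsum : T.sum = 0 := by
        have h1 := congrArg Multiset.sum hTS
        rw [Multiset.sum_add, hSsum, add_zero] at h1
        rw [h1, Multiset.sum_add, Multiset.sum_replicate, Multiset.sum_replicate,
          nsmul_eq_mul, nsmul_eq_mul, mul_one]
        have hαc : (α : ZMod n) = -(ℓ : ZMod n) + g := by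
          rw [hα, Nat.cast_add, Nat.cast_sub (le_of_lt (lt_of_lt_of_le hlt hnt))]
          push_cast
          simp
        have hβc : (β : ZMod n) = -(g : ZMod n) := by
          rw [hβ, Nat.cast_sub (le_of_lt (lt_trans hglt hlt))]
          simp
        rw [hαc, hβc, hb]
        ring_nf
        linear_combination -hkey
      -- every element of T is 1 or b
      have hmem : ∀ x ∈ T, x = 1 ∨ x = b := by
        intro x hx
        have := Multiset.mem_of_le hTle hx
        rw [Multiset.mem_add] at this
        rcases this with h | h
        · exact Or.inl (Multiset.eq_of_mem_replicate h)
        · exact Or.inr (Multiset.eq_of_mem_replicate h)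
      set c := T.count b with hc
      have hfil1 : T.filter (· = b) = Multiset.replicate c b := Multiset.filter_eq' T b
      have hsplit : T.filter (· = b) + T.filter (fun x => ¬ x = b) = T :=
        Multiset.filter_add_not _ T
      have hcle : c ≤ n - ℓ := by
        rw [← hTcard]
        rw [hc]
        exact Multiset.count_le_card b T
      have hfil2 : T.filter (fun x => ¬ x = b) = Multiset.replicate (n - ℓ - c) 1 := by
        rw [Multiset.eq_replicate]
        constructor
        · have := congrArg Multiset.card hsplit
          rw [Multiset.card_add, hfil1, Multiset.card_replicate, hTcard] at this
          omega
        · intro x hx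
          rw [Multiset.mem_filter] at hx
          rcases hmem x hx.1 with h | h
          · exact h
          · exact absurd h hx.2
      have hTsum' : ((n - ℓ - c : ℕ) : ZMod n) + (c : ZMod n) * b = 0 := by
        have := congrArg Multiset.sum hsplit
        rw [hfil1, hfil2, Multiset.sum_add, Multiset.sum_replicate, Multiset.sum_replicate,
          nsmul_eq_mul, nsmul_eq_mul, mul_one, hTsum] at this
        linear_combination this
      -- deduce c * u = ℓ in ZMod n
      have hcast : ((n - ℓ - c : ℕ) : ZMod n) = -(ℓ : ZMod n) - c := by
        rw [Nat.cast_sub hcle, Nat.cast_sub (le_of_lt hlt)]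
        simp
      rw [hcast, hb] at hTsum'
      have hcu : (c : ZMod n) * (u : ZMod n) = (ℓ : ZMod n) := by
        linear_combination hTsum'
      have hngu : ((n - g : ℕ) : ZMod n) * (u : ZMod n) = (ℓ : ZMod n) := by
        rw [Nat.cast_sub (le_of_lt (lt_trans hglt hlt))]
        push_cast
        rw [ZMod.natCast_self]
        linear_combination -hkey
      have heq : (c : ZMod n) = ((n - g : ℕ) : ZMod n) := by
        have := hcu.trans hngu.symm
        exact (Units.mul_left_inj u).mp this
      have hceq : c = n - g := by
        have h1 := congrArg ZMod.val heq
        rw [ZMod.val_cast_of_lt (by omega : c < n),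
          ZMod.val_cast_of_lt (by omega : n - g < n)] at h1
        exact h1
      omega
end

section
/- The modified Erdős–Ginzburg–Ziv constant s'_{nt}(ℤ/nℤ) equals (t+1)n - ℓ + 1, where ℓ is the smallest positive integer not dividing n. -/
/-!
Upper bound: if `|J| ≥ (t+1)n - 1`, iterate Erdős–Ginzburg–Ziv. Otherwise `|J| = (t+1)n - j`
with `2 ≤ j < ℓ`, so `j ∣ n`, say `n = jq`, and `|J| = ((t+1)q - 1) j`. Erdős–Ginzburg–Ziv in
`ℤ/jℤ` cuts `J` into `(t+1)q - 1` blocks of size `j` whose sums lie in `jℤ/nℤ ≅ ℤ/qℤ`, and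
Erdős–Ginzburg–Ziv in `ℤ/qℤ` applied to these sums picks `tq` blocks with total sum `0`.

Lower bound: take `β` with `ℓβ = g := gcd(ℓ, n)` in `ℤ/nℤ` and `J` made of `nt - g` copies of
`β - 1` and `n + g - ℓ < n` copies of `β`. A subsequence of length `nt` with `v` copies of `β`
sums to `v`, so `v = 0`, and then it has more than `nt - g` copies of `β - 1`.
-/

theorem Multiset.exists_eq_replicate_add_replicate_of_le {α : Type*} {S : Multiset α} {a b : α}
    {x y : ℕ} (h : S ≤ Multiset.replicate x a + Multiset.replicate y b) :
    ∃ u ≤ x, ∃ v ≤ y, S = Multiset.replicate u a + Multiset.replicate v b := by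
  classical
  obtain ⟨u, hu, hSa⟩ := Multiset.le_replicate_iff.1 (Multiset.inter_le_right (s := S))
  obtain ⟨v, hv, hSb⟩ := Multiset.le_replicate_iff.1 (tsub_le_iff_left.2 h)
  exact ⟨u, hu, v, hv, by rw [← hSa, ← hSb, add_comm, Multiset.sub_add_inter]⟩

namespace ZMod

section

variable {α : Type*} {n : ℕ}

theorem erdos_ginzburg_ziv_multiset_map (f : α → ZMod n) (s : Multiset α)
    (hs : 2 * n - 1 ≤ Multiset.card s) :
    ∃ t ≤ s, Multiset.card t = n ∧ (t.map f).sum = 0 := by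
  classical
  obtain ⟨t, hts, ht⟩ :=
    ZMod.erdos_ginzburg_ziv (s := s.toEnumFinset) (f ∘ Prod.fst) (by simpa using hs)
  exact ⟨t.1.map Prod.fst, Multiset.map_fst_le_of_subset_toEnumFinset hts, by simpa using ht⟩

theorem erdos_ginzburg_ziv_multiset_map_mul (f : α → ZMod n) (k : ℕ) (s : Multiset α)
    (hs : (k + 1) * n - 1 ≤ Multiset.card s) :
    ∃ t ≤ s, Multiset.card t = k * n ∧ (t.map f).sum = 0 := by
  classical
  induction k generalizing s with
  | zero => exact ⟨0, by simp⟩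
  | succ k ih =>
    obtain ⟨b, hbs, hb, hbf⟩ := erdos_ginzburg_ziv_multiset_map f s (by grind)
    obtain ⟨t, hts, ht, htf⟩ := ih (s - b) (by grind [Multiset.card_sub hbs])
    refine ⟨b + t, ?_, by grind [Multiset.card_add], by simp [hbf, htf]⟩
    calc b + t ≤ b + (s - b) := by gcongr
      _ = s := add_tsub_cancel_of_le hbs

theorem exists_partition_card_eq_sum_map_eq_zero (f : α → ZMod n) (b : ℕ) (s : Multiset α)
    (hs : Multiset.card s = b * n) (hsf : (s.map f).sum = 0) :
    ∃ P : Multiset (Multiset α), Multiset.card P = b ∧ P.join = s ∧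
      ∀ B ∈ P, Multiset.card B = n ∧ (B.map f).sum = 0 := by
  classical
  induction b generalizing s with
  | zero => exact ⟨0, by simp_all⟩
  | succ b ih =>
    rcases Nat.eq_zero_or_pos b with rfl | hb
    · exact ⟨{s}, by simp_all⟩
    obtain ⟨B, hBs, hB, hBf⟩ := erdos_ginzburg_ziv_multiset_map f s
      (by rw [hs]; have := Nat.mul_le_mul_right n hb; grind)
    have hsplit : B + (s - B) = s := add_tsub_cancel_of_le hBs
    obtain ⟨P, hP, hPs, hPB⟩ := ih (s - B) (by grind [Multiset.card_sub hBs])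
      (by rw [← hsplit, Multiset.map_add, Multiset.sum_add, hBf, zero_add] at hsf; exact hsf)
    refine ⟨B ::ₘ P, by simp [hP], by simp [hPs, hsplit], ?_⟩
    simpa [hB, hBf] using hPB

end

theorem natCast_mul_eq_zero_iff {j q c : ℕ} (hj : j ≠ 0) :
    ((j * c : ℕ) : ZMod (j * q)) = 0 ↔ ((c : ℕ) : ZMod q) = 0 := by
  rw [ZMod.natCast_eq_zero_iff, ZMod.natCast_eq_zero_iff,
    Nat.mul_dvd_mul_iff_left (Nat.pos_of_ne_zero hj)]

theorem exists_zero_sum_of_card_eq_mul_sub_dvd {n j : ℕ} (k : ℕ) (hn : 0 < n) (hjn : j ∣ n)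
    (X : Multiset (ZMod n)) (hX : Multiset.card X = (k + 1) * n - j) (hXsum : X.sum = 0) :
    ∃ S ≤ X, Multiset.card S = k * n ∧ S.sum = 0 := by
  obtain ⟨q, rfl⟩ := hjn
  have hj : j ≠ 0 := by rintro rfl; simp at hn
  have : NeZero (j * q) := ⟨hn.ne'⟩
  set φ := ZMod.castHom (dvd_mul_right j q) (ZMod j)
  obtain ⟨P, hP, hPX, hPB⟩ := exists_partition_card_eq_sum_map_eq_zero φ ((k + 1) * q - 1) X
    (by rw [hX, Nat.sub_mul]; ring_nf) (by rw [← map_multiset_sum, hXsum, map_zero])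
  -- a block sum lies in `jℤ/nℤ`; `c B` is its coordinate in `ℤ/qℤ`
  set c : Multiset (ZMod (j * q)) → ℕ := fun B => B.sum.val / j
  obtain ⟨N, hNP, hN, hNc⟩ :=
    erdos_ginzburg_ziv_multiset_map_mul (fun B => (c B : ZMod q)) k P (by rw [hP])
  have hblock : ∀ B ∈ N, Multiset.card B = j ∧ B.sum = ((j * c B : ℕ) : ZMod (j * q)) := by
    intro B hB
    obtain ⟨hBcard, hBsum⟩ := hPB B (Multiset.mem_of_le hNP hB)
    rw [← map_multiset_sum, ← ZMod.natCast_zmod_val B.sum, map_natCast,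
      ZMod.natCast_eq_zero_iff] at hBsum
    exact ⟨hBcard, by rw [Nat.mul_div_cancel' hBsum, ZMod.natCast_zmod_val]⟩
  refine ⟨N.join, ?_, ?_, ?_⟩
  · obtain ⟨R, rfl⟩ := Multiset.le_iff_exists_add.1 hNP
    rw [← hPX, Multiset.join_add]
    exact le_add_right le_rfl
  · rw [Multiset.card_join, Multiset.map_congr rfl (fun B hB => (hblock B hB).1),
      Multiset.map_const', Multiset.sum_replicate, hN, smul_eq_mul]
    ring
  · have hcq : (((N.map c).sum : ℕ) : ZMod q) = 0 := by
      simpa [Nat.cast_multiset_sum] using hNc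
    rw [Multiset.sum_join, Multiset.map_congr rfl (fun B hB => (hblock B hB).2)]
    simpa [Nat.cast_multiset_sum, Multiset.sum_map_mul_left] using
      (natCast_mul_eq_zero_iff (q := q) hj).2 hcq

theorem exists_zero_sum_of_le_card {n t ℓ : ℕ} (hn : 0 < n)
    (hdvd : ∀ m, 0 < m → m < ℓ → m ∣ n) (J : Multiset (ZMod n))
    (hJ : (t + 1) * n - ℓ + 1 ≤ Multiset.card J) (hJsum : J.sum = 0) :
    ∃ S ≤ J, Multiset.card S = n * t ∧ S.sum = 0 := by
  rw [mul_comm n t]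
  by_cases hlarge : (t + 1) * n - 1 ≤ Multiset.card J
  · simpa using erdos_ginzburg_ziv_multiset_map_mul id t J hlarge
  · exact exists_zero_sum_of_card_eq_mul_sub_dvd t hn
      (hdvd ((t + 1) * n - Multiset.card J) (by omega) (by omega)) J (by omega) hJsum

theorem exists_zero_sum_avoiding_zero_sum_card_mul {n t ℓ : ℕ} (ht : 1 ≤ t) (hℓ0 : 0 < ℓ)
    (hℓ : ¬ ℓ ∣ n) (hℓn : ℓ ≤ n + 1) :
    ∃ J : Multiset (ZMod n), Multiset.card J = (t + 1) * n - ℓ ∧ J.sum = 0 ∧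
      ∀ S ≤ J, Multiset.card S = n * t → S.sum ≠ 0 := by
  have hn : 0 < n := Nat.pos_of_ne_zero (by rintro rfl; exact hℓ (dvd_zero ℓ))
  set g := ℓ.gcd n
  have hg0 : 0 < g := Nat.gcd_pos_of_pos_left n hℓ0
  have hgn : g ≤ n := Nat.gcd_le_right (m := ℓ) hn
  have hgℓ : g < ℓ := (Nat.gcd_le_left n hℓ0).lt_of_ne fun h => hℓ (h ▸ Nat.gcd_dvd_right ℓ n)
  have hnt : n ≤ n * t := Nat.le_mul_of_pos_right n ht
  set β : ZMod n := (ℓ.gcdA n : ZMod n)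
  have hβ : (ℓ : ZMod n) * β = g := by
    have := congrArg (Int.cast : ℤ → ZMod n) (Nat.gcd_eq_gcd_ab ℓ n)
    push_cast at this
    simpa using this.symm
  refine ⟨.replicate (n * t - g) (β - 1) + .replicate (n + g - ℓ) β, ?_, ?_, ?_⟩
  · have : (t + 1) * n = n * t + n := by ring
    simp only [Multiset.card_add, Multiset.card_replicate]
    omega
  · simp only [Multiset.sum_add, Multiset.sum_replicate, nsmul_eq_mul]
    push_cast [Nat.cast_sub (hgn.trans hnt), Nat.cast_sub (by omega : ℓ ≤ n + g)]
    simp only [ZMod.natCast_self, zero_mul, zero_add, zero_sub]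
    linear_combination -hβ
  · intro S hS hScard hSsum
    obtain ⟨u, hu, v, hv, rfl⟩ := Multiset.exists_eq_replicate_add_replicate_of_le hS
    simp only [Multiset.card_add, Multiset.card_replicate] at hScard
    simp only [Multiset.sum_add, Multiset.sum_replicate, nsmul_eq_mul] at hSsum
    have huv : (u : ZMod n) + v = 0 := by
      exact_mod_cast (congrArg (Nat.cast : ℕ → ZMod n) hScard).trans (by simp)
    have hv0 : (v : ZMod n) = 0 := by linear_combination hSsum + (1 - β) * huv
    rw [ZMod.natCast_eq_zero_iff] at hv0
    have hv_eq : v = 0 := Nat.eq_zero_of_dvd_of_lt hv0 (by omega)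
    omega

end ZMod

theorem modified_egz_cyclic (n t ℓ : ℕ) (hn : 0 < n) (ht : 1 ≤ t)
    (hℓ : IsLeast {m : ℕ | 0 < m ∧ ¬ m ∣ n} ℓ) :
    IsLeast {L : ℕ | ∀ J : Multiset (ZMod n), L ≤ Multiset.card J → J.sum = 0 →
        ∃ S ≤ J, Multiset.card S = n * t ∧ S.sum = 0}
      ((t + 1) * n - ℓ + 1) := by
  obtain ⟨⟨hℓ0, hℓ⟩, hℓmin⟩ := hℓ
  have hdvd : ∀ m, 0 < m → m < ℓ → m ∣ n := fun m hm hmℓ => by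
    by_contra h
    exact (hℓmin ⟨hm, h⟩).not_gt hmℓ
  have hℓn : ℓ ≤ n + 1 := hℓmin ⟨n.succ_pos, fun h => by have := Nat.le_of_dvd hn h; omega⟩
  refine ⟨fun J => ZMod.exists_zero_sum_of_le_card hn hdvd J, fun L hL => ?_⟩
  obtain ⟨J, hJ, hJsum, hJfree⟩ := ZMod.exists_zero_sum_avoiding_zero_sum_card_mul ht hℓ0 hℓ hℓn
  by_contra! hlt
  obtain ⟨S, hSJ, hS, hSsum⟩ := hL J (by omega) hJsum
  exact hJfree S hSJ hS hSsum
end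

section
/- Let p be prime and J a sequence of elements of (ℤ/pℤ)² with |J| = 3p-2 or |J| = 3p-1. If J has no zero-sum subsequence of length p, then the number of zero-sum subsequences of J of length 2p is congruent to -1 modulo p. -/
/-!
Write `J = (aᵢ, bᵢ)ᵢ`, indexed by its `n ≥ 3p - 2` positions, and apply Chevalley–Warning to
`∑ xᵢ ^ (p - 1)`, `∑ aᵢ xᵢ ^ (p - 1)`, `∑ bᵢ xᵢ ^ (p - 1)`, of total degree `3(p - 1) < n`.
Since `xᵢ ^ (p - 1)` is the indicator of `xᵢ ≠ 0`, the solutions are the `x` whose support `T`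
is a zero-sum subsequence of length divisible by `p`, and each such `T` supports
`(p - 1) ^ |T| ≡ (-1) ^ |T|` solutions. As `|T| < 3p` and `|T| ≠ p`, the admissible `T` are `∅`
and the zero-sum subsequences of length `2p`, so `1 + (2p ∣ J) ≡ 0 (mod p)`.
-/

open Finset MvPolynomial

theorem Multiset.powerset_map {α β : Type*} (f : α → β) (s : Multiset α) :
    (s.map f).powerset = s.powerset.map (Multiset.map f) := by
  induction s using Multiset.induction with
  | empty => simp
  | cons a s ih => simp [powerset_cons, ih, map_map]

theorem Finset.map_val_val_powerset {α : Type*} (s : Finset α) :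
    s.powerset.val.map Finset.val = s.val.powerset := by
  simp [Finset.powerset, Multiset.map_pmap, Multiset.pmap_eq_map]

theorem Multiset.card_filter_powerset_map_univ {ι α : Type*} [Fintype ι] (v : ι → α)
    (P : Multiset α → Prop) [DecidablePred P] :
    Multiset.card (((univ : Finset ι).val.map v).powerset.filter P) =
      #{T : Finset ι | P (T.val.map v)} := by
  rw [Multiset.powerset_map, ← Finset.map_val_val_powerset, Multiset.map_map,
    Multiset.filter_map, Multiset.card_map, Finset.powerset_univ]
  rfl

section ChevalleyWarning

variable {K ι : Type*} [Field K] [Fintype K] [DecidableEq K] [Fintype ι] [DecidableEq ι]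

theorem card_filter_support_eq (T : Finset ι) :
    #{x : ι → K | ({i | x i ≠ 0} : Finset ι) = T} = (Fintype.card K - 1) ^ #T := by
  have : ({x : ι → K | ({i | x i ≠ 0} : Finset ι) = T} : Finset _) =
      Fintype.piFinset fun i => if i ∈ T then {0}ᶜ else {0} := by
    ext x
    simp only [mem_filter, mem_univ, true_and, Fintype.mem_piFinset, Finset.ext_iff]
    refine forall_congr' fun i => ?_
    split_ifs <;> simp [*]
  rw [this, Fintype.card_piFinset]
  simp [apply_ite Finset.card, card_compl, prod_ite_mem]

theorem card_filter_pred_support_eq_sum (P : Finset ι → Prop) [DecidablePred P] :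
    #{x : ι → K | P {i | x i ≠ 0}} = ∑ T with P T, (Fintype.card K - 1) ^ #T := by
  rw [card_eq_sum_card_fiberwise (f := fun x : ι → K => ({i | x i ≠ 0} : Finset ι))
    (t := {T | P T}) fun x hx => by simpa using hx]
  refine sum_congr rfl fun T hT => ?_
  rw [← card_filter_support_eq, filter_filter]
  congr 1
  ext x
  simp only [mem_filter, mem_univ, true_and, and_iff_right_iff_imp]
  rintro rfl
  simpa using hT

theorem sum_neg_one_pow_card_eq_zero_of_card_mul_lt {κ : Type*} [Fintype κ] (c : κ → ι → K)
    (h : Fintype.card κ * (Fintype.card K - 1) < Fintype.card ι) :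
    ∑ T : Finset ι with ∀ k, ∑ i ∈ T, c k i = 0, (-1 : K) ^ #T = 0 := by
  let F : κ → MvPolynomial ι K := fun k => ∑ i, c k i • X i ^ (Fintype.card K - 1)
  have hdeg : ∑ k, (F k).totalDegree < Fintype.card ι := by
    refine lt_of_le_of_lt ?_ h
    rw [← smul_eq_mul, ← card_univ]
    refine sum_le_card_nsmul _ _ _ fun k _ => totalDegree_finsetSum_le fun i _ => ?_
    exact (totalDegree_smul_le _ _).trans (totalDegree_X_pow _ _).le
  have heval (x : ι → K) (k : κ) : eval x (F k) = ∑ i ∈ {i | x i ≠ 0}, c k i := by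
    simp only [F, map_sum, smul_eq_C_mul, eval_mul, eval_C, eval_pow, eval_X, sum_filter]
    refine sum_congr rfl fun i _ => ?_
    split_ifs with hx
    · rw [FiniteField.pow_card_sub_one_eq_one _ hx, mul_one]
    · simp [not_not.mp hx, (Nat.sub_pos_of_lt (Fintype.one_lt_card (α := K))).ne']
  have hdvd := char_dvd_card_solutions_of_fintype_sum_lt (ringChar K) hdeg
  simp only [heval, Fintype.card_subtype] at hdvd
  rw [card_filter_pred_support_eq_sum (fun T => ∀ k, ∑ i ∈ T, c k i = 0)] at hdvd
  have hq : ((Fintype.card K - 1 : ℕ) : K) = -1 := by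
    rw [Nat.cast_sub Fintype.card_pos, FiniteField.cast_card_eq_zero, Nat.cast_one, zero_sub]
  simpa [hq] using (CharP.cast_eq_zero_iff K (ringChar K) _).mpr hdvd

end ChevalleyWarning

theorem Nat.eq_zero_or_eq_two_mul_of_dvd {p m : ℕ} (hdvd : p ∣ m) (hlt : m < 3 * p)
    (hne : m ≠ p) : m = 0 ∨ m = 2 * p := by
  obtain ⟨k, rfl⟩ := hdvd
  have : k < 3 := Nat.lt_of_mul_lt_mul_left (by linarith : p * k < p * 3)
  interval_cases k <;> simp_all [mul_comm]

section ZeroSums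

variable {p : ℕ} [Fact p.Prime] {ι : Type*} [Fintype ι] [DecidableEq ι]

theorem sum_neg_one_pow_card_filter_dvd_sum_eq_zero (v : ι → ZMod p × ZMod p)
    (h : 3 * (p - 1) < Fintype.card ι) :
    ∑ T : Finset ι with p ∣ #T ∧ ∑ i ∈ T, v i = 0, (-1 : ZMod p) ^ #T = 0 := by
  have := sum_neg_one_pow_card_eq_zero_of_card_mul_lt ![1, fun i => (v i).1, fun i => (v i).2]
    (by rwa [ZMod.card, Fintype.card_fin])
  simpa [Fin.forall_fin_succ, Prod.ext_iff, Prod.fst_sum, Prod.snd_sum,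
    ← ZMod.natCast_eq_zero_iff] using this

theorem cast_card_zeroSum_two_mul_eq_neg_one (v : ι → ZMod p × ZMod p)
    (hlo : 3 * (p - 1) < Fintype.card ι) (hhi : Fintype.card ι < 3 * p)
    (hno : ∀ T : Finset ι, #T = p → ∑ i ∈ T, v i ≠ 0) :
    (#{T : Finset ι | #T = 2 * p ∧ ∑ i ∈ T, v i = 0} : ZMod p) = -1 := by
  have hp := (Fact.out : p.Prime).pos
  have hS : ({T | p ∣ #T ∧ ∑ i ∈ T, v i = 0} : Finset (Finset ι)) =
      insert ∅ ({T | #T = 2 * p ∧ ∑ i ∈ T, v i = 0} : Finset (Finset ι)) := by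
    ext T
    simp only [mem_filter, mem_univ, true_and, mem_insert, ← card_eq_zero]
    constructor
    · rintro ⟨hdvd, hsum⟩
      have hlt : #T < 3 * p := (card_le_univ T).trans_lt hhi
      rcases Nat.eq_zero_or_eq_two_mul_of_dvd hdvd hlt fun h => hno T h hsum with h | h
      exacts [.inl h, .inr ⟨h, hsum⟩]
    · rintro (h | ⟨h, hsum⟩)
      · simp [card_eq_zero.mp h]
      · exact ⟨h ▸ dvd_mul_left p 2, hsum⟩
  have hcw := sum_neg_one_pow_card_filter_dvd_sum_eq_zero v hlo
  rw [hS, sum_insert (by simp [hp.ne']), card_empty, pow_zero] at hcw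
  have hsum : ∑ T ∈ ({T | #T = 2 * p ∧ ∑ i ∈ T, v i = 0} : Finset (Finset ι)),
      (-1 : ZMod p) ^ #T = #{T : Finset ι | #T = 2 * p ∧ ∑ i ∈ T, v i = 0} := by
    rw [cast_card]
    refine sum_congr rfl fun T hT => ?_
    simp [(mem_filter.mp hT).2.1, pow_mul]
  linear_combination hcw - hsum

end ZeroSums

theorem reiher_cor24 (p : ℕ) (hp : p.Prime) (J : Multiset (ZMod p × ZMod p))
    (hJ : Multiset.card J = 3 * p - 2 ∨ Multiset.card J = 3 * p - 1)
    (hno : ¬ ∃ S ≤ J, Multiset.card S = p ∧ S.sum = 0) :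
    ((J.powerset.filter (fun S => Multiset.card S = 2 * p ∧ S.sum = 0)).card : ZMod p)
      = -1 := by
  have := Fact.mk hp
  classical
  let v : J → ZMod p × ZMod p := (↑)
  have hJv : (univ : Finset J).val.map v = J := Multiset.map_univ_coe J
  have hcount := Multiset.card_filter_powerset_map_univ v
    (fun S => Multiset.card S = 2 * p ∧ S.sum = 0)
  simp only [hJv, Multiset.card_map, card_val, sum_map_val] at hcount
  have hcardJ : Fintype.card J = Multiset.card J := Multiset.card_coe J
  have hp2 := hp.two_le
  rw [hcount]
  refine cast_card_zeroSum_two_mul_eq_neg_one v (by omega) (by omega) fun T hT hsum => hno ?_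
  refine ⟨T.val.map v, ?_, by simpa using hT, by simpa using hsum⟩
  simpa only [hJv] using Multiset.map_le_map (f := v) (val_le_iff.mpr (subset_univ T))
end

section
/- Let p be prime. Any zero-sum sequence of exactly 3p elements in (ℤ/pℤ)² contains a zero-sum subsequence of length p. -/
set_option maxHeartbeats 1000000 in
open MvPolynomial Finset in
theorem reiher_cor25 (p : ℕ) (hp : p.Prime) (J : Multiset (ZMod p × ZMod p))
    (hJ : Multiset.card J = 3 * p) (hsum : J.sum = 0) :
    ∃ S ≤ J, Multiset.card S = p ∧ S.sum = 0 := by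
  haveI : Fact p.Prime := ⟨hp⟩
  by_contra hno
  push_neg at hno
  have hp2 := hp.two_le
  -- pick an element a of J
  have hJpos : J ≠ 0 := by
    intro h
    rw [h] at hJ
    simp at hJ
    omega
  obtain ⟨a, ha⟩ := Multiset.exists_mem_of_ne_zero hJpos
  obtain ⟨J', rfl⟩ := Multiset.exists_cons_of_mem ha
  set l := J'.toList with hldef
  have hlJ : (l : Multiset (ZMod p × ZMod p)) = J' := J'.coe_toList
  have hm : l.length = 3 * p - 1 := by
    have h1 : Multiset.card (l : Multiset (ZMod p × ZMod p)) = l.length := rfl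
    rw [Multiset.card_cons] at hJ
    rw [hlJ] at h1
    omega
  have hJ'sum : a + J'.sum = 0 := by
    rw [← Multiset.sum_cons]; exact hsum
  -- the three polynomials, given uniformly by coefficient functions
  set m := l.length with hmdef
  set g : Fin 3 → (ZMod p × ZMod p) → ZMod p := ![Prod.fst, Prod.snd, fun _ => 1] with hgdef
  have hg0 : ∀ y, g 0 y = y.1 := fun y => rfl
  have hg1 : ∀ y, g 1 y = y.2 := fun y => rfl
  have hg2 : ∀ y, g 2 y = 1 := fun y => rfl
  set f : Fin 3 → MvPolynomial (Fin m) (ZMod p) := fun j =>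
    (∑ i : Fin m, C (g j (l.get i)) * X i ^ (p - 1)) + C (g j a) with hfdef
  -- degree bound
  have hdeg : ∀ j, (f j).totalDegree ≤ p - 1 := by
    intro j
    simp only [hfdef]
    refine le_trans (totalDegree_add _ _) (max_le ?_ ?_)
    · refine le_trans (totalDegree_finset_sum _ _) (Finset.sup_le fun i _ => ?_)
      refine le_trans (totalDegree_mul _ _) ?_
      simp [totalDegree_X_pow]
    · simp [totalDegree_C]
  have hcard : Fintype.card (Fin m) = m := Fintype.card_fin m
  have hdegsum : (∑ j : Fin 3, (f j).totalDegree) < Fintype.card (Fin m) := by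
    have : (∑ j : Fin 3, (f j).totalDegree) ≤ 3 * (p - 1) := by
      rw [Fin.sum_univ_three]
      have h0 := hdeg 0; have h1 := hdeg 1; have h2 := hdeg 2
      omega
    rw [hcard]
    omega
  -- key evaluation lemma
  have hsum_eval : ∀ (x : Fin m → ZMod p) (c : Fin m → ZMod p),
      (∑ i : Fin m, c i * x i ^ (p - 1)) =
        ∑ i ∈ Finset.univ.filter (fun i => x i ≠ 0), c i := by
    intro x c
    rw [Finset.sum_filter]
    refine Finset.sum_congr rfl fun i _ => ?_
    by_cases h : x i = 0
    · simp [h, zero_pow (by omega : p - 1 ≠ 0)]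
    · simp [h, ZMod.pow_card_sub_one_eq_one h]
  have hevalf : ∀ (x : Fin m → ZMod p) (j : Fin 3),
      eval x (f j) =
        (∑ i ∈ Finset.univ.filter (fun i => x i ≠ 0), g j (l.get i)) + g j a := by
    intro x j
    simp only [hfdef]
    rw [← hsum_eval x (fun i => g j (l.get i))]
    simp
  -- support multiset facts
  have hmapuniv : ((Finset.univ : Finset (Fin m)).val.map l.get :
      Multiset (ZMod p × ZMod p)) = (l : Multiset (ZMod p × ZMod p)) := by
    have h1 : (Finset.univ : Finset (Fin m)).val = (List.finRange m : Multiset (Fin m)) := rfl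
    rw [h1, Multiset.map_coe, List.map_get_finRange]
  -- every common solution has full support
  have hsol : ∀ x : Fin m → ZMod p, (∀ j, eval x (f j) = 0) → ∀ i, x i ≠ 0 := by
    intro x hx
    set s : Finset (Fin m) := Finset.univ.filter (fun i => x i ≠ 0) with hsdef
    set T : Multiset (ZMod p × ZMod p) := s.val.map l.get with hTdef
    have hTle : T ≤ J' := by
      rw [← hlJ, ← hmapuniv]
      exact Multiset.map_le_map (Finset.val_le_iff.mpr (Finset.subset_univ s))
    set S : Multiset (ZMod p × ZMod p) := a ::ₘ T with hSdef
    have hSle : S ≤ a ::ₘ J' := Multiset.cons_le_cons a hTle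
    have hTcard : Multiset.card T = s.card := by rw [hTdef, Multiset.card_map]; rfl
    have hScard : Multiset.card S = s.card + 1 := by
      rw [hSdef, Multiset.card_cons, hTcard]
    have hTsum : T.sum = ∑ i ∈ s, l.get i := rfl
    -- card divisible by p
    have h2 := hx 2
    rw [hevalf x 2] at h2
    simp only [hg2] at h2
    have hcards : ((s.card : ℕ) : ZMod p) + 1 = 0 := by
      simpa using h2
    have hdvd : p ∣ Multiset.card S := by
      rw [hScard]
      have hz : (((s.card + 1 : ℕ)) : ZMod p) = 0 := by exact_mod_cast hcards
      exact (ZMod.natCast_eq_zero_iff _ _).mp hz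
    -- S sums to zero
    have hSsum : S.sum = 0 := by
      have h0 := hx 0
      have h1 := hx 1
      rw [hevalf x 0] at h0
      rw [hevalf x 1] at h1
      simp only [hg0] at h0
      simp only [hg1] at h1
      have hS' : S.sum = a + ∑ i ∈ s, l.get i := by rw [hSdef, Multiset.sum_cons, hTsum]
      rw [hS']
      ext
      · rw [Prod.fst_add, Prod.fst_sum, Prod.fst_zero, add_comm]; exact h0
      · rw [Prod.snd_add, Prod.snd_sum, Prod.snd_zero, add_comm]; exact h1
    -- case on card S
    obtain ⟨c, hc⟩ := hdvd
    have hcle : Multiset.card S ≤ 3 * p := by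
      have := Multiset.card_le_card hSle
      rw [hJ] at this
      exact this
    have hcpos : 0 < Multiset.card S := by rw [hScard]; omega
    have hc3 : c = 1 ∨ c = 2 ∨ c = 3 := by
      rcases Nat.lt_or_ge c 4 with h | h
      · interval_cases c <;> omega
      · exfalso; nlinarith
    rcases hc3 with rfl | rfl | rfl
    · exact absurd hSsum (hno S hSle (by omega))
    · -- complement has card p and sum 0
      set R := (a ::ₘ J') - S with hRdef
      have hRle : R ≤ a ::ₘ J' := Multiset.sub_le_self _ _
      have hRcard : Multiset.card R = p := by
        rw [hRdef, Multiset.card_sub hSle, hJ]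
        omega
      have hRsum : R.sum = 0 := by
        have hadd : R + S = a ::ₘ J' := tsub_add_cancel_of_le hSle
        have hs2 := congrArg Multiset.sum hadd
        rw [Multiset.sum_add, hSsum, add_zero] at hs2
        rw [hs2]; exact hsum
      exact absurd hRsum (hno R hRle hRcard)
    · -- full support
      have hscard : s.card = m := by omega
      have hsuniv : s = Finset.univ := Finset.eq_univ_of_card s (by rw [hscard, hcard])
      intro i
      have hi : i ∈ s := by rw [hsuniv]; exact Finset.mem_univ i
      rw [hsdef] at hi
      simpa using hi
  -- conversely, full support gives a solution
  have hall : ∀ x : Fin m → ZMod p, (∀ i, x i ≠ 0) → ∀ j, eval x (f j) = 0 := by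
    intro x hx
    have hfilt : Finset.univ.filter (fun i => x i ≠ 0) = (Finset.univ : Finset (Fin m)) :=
      Finset.eq_univ_of_forall (fun i => by simp [hx i])
    have hsum1 : (∑ i : Fin m, l.get i) = J'.sum := by
      rw [← hlJ]
      have h3 : ((l : Multiset (ZMod p × ZMod p))).sum = ((Finset.univ :
          Finset (Fin m)).val.map l.get).sum := by rw [hmapuniv]
      rw [h3]
      rfl
    have h0 : eval x (f 0) = 0 := by
      rw [hevalf x 0, hfilt]
      simp only [hg0]
      rw [← Prod.fst_sum, hsum1]
      have h4 := congrArg Prod.fst hJ'sum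
      rw [Prod.fst_add, Prod.fst_zero] at h4
      rw [add_comm]
      exact h4
    have h1 : eval x (f 1) = 0 := by
      rw [hevalf x 1, hfilt]
      simp only [hg1]
      rw [← Prod.snd_sum, hsum1]
      have h4 := congrArg Prod.snd hJ'sum
      rw [Prod.snd_add, Prod.snd_zero] at h4
      rw [add_comm]
      exact h4
    have h2 : eval x (f 2) = 0 := by
      rw [hevalf x 2, hfilt]
      simp only [hg2]
      have h5 : (∑ _i ∈ (Finset.univ : Finset (Fin m)), (1 : ZMod p)) = (m : ZMod p) := by
        simp [hcard]
      rw [h5]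
      have hcast : ((m : ℕ) : ZMod p) + 1 = ((3 * p : ℕ) : ZMod p) := by
        have h6 : m + 1 = 3 * p := by omega
        rw [← h6]; push_cast; ring
      rw [hcast]
      simp [ZMod.natCast_self]
    intro j
    fin_cases j
    · exact h0
    · exact h1
    · exact h2
  -- Chevalley–Warning
  have hequiv : { x : Fin m → ZMod p // ∀ j, eval x (f j) = 0 } ≃
      { x : Fin m → ZMod p // ∀ i, x i ≠ 0 } :=
    Equiv.subtypeEquivRight (fun x => ⟨hsol x, hall x⟩)
  have hcount : Fintype.card { x : Fin m → ZMod p // ∀ i, x i ≠ 0 } = (p - 1) ^ m := by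
    have e : { x : Fin m → ZMod p // ∀ i, x i ≠ 0 } ≃ (Fin m → { y : ZMod p // y ≠ 0 }) :=
      Equiv.subtypePiEquivPi (p := fun _ y => y ≠ 0)
    rw [Fintype.card_congr e, Fintype.card_pi]
    have hne : Fintype.card { y : ZMod p // y ≠ 0 } = p - 1 := by
      haveI : NeZero p := ⟨by omega⟩
      have h7 := Fintype.card_subtype_compl (fun y : ZMod p => y = 0)
      simp only [Fintype.card_subtype_eq, ZMod.card] at h7
      exact h7
    simp [hne, hcard]
  have key : ∀ (inst : Fintype { x : Fin m → ZMod p // ∀ i : Fin 3, eval x (f i) = 0 }),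
      @Fintype.card _ inst = (p - 1) ^ m := by
    intro inst
    calc @Fintype.card _ inst = Nat.card { x : Fin m → ZMod p // ∀ i : Fin 3,
          eval x (f i) = 0 } := (@Nat.card_eq_fintype_card _ inst).symm
      _ = Nat.card { x : Fin m → ZMod p // ∀ i : Fin m, x i ≠ 0 } := Nat.card_congr hequiv
      _ = (p - 1) ^ m := by rw [Nat.card_eq_fintype_card, hcount]
  have hCW : p ∣ (p - 1) ^ m := by
    have h := char_dvd_card_solutions_of_fintype_sum_lt p hdegsum
    rwa [key _] at h
  clear hno hJpos ha hlJ hJ'sum hgdef hg0 hg1 hg2 hfdef hdeg hcard hdegsum hsum_eval hevalf hmapuniv hsol hall hequiv hcount key hsum hJ hm hldef hmdef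
  have hdvd1 : p ∣ p - 1 := hp.dvd_of_dvd_pow hCW
  have hle : p ≤ p - 1 := Nat.le_of_dvd (by omega) hdvd1
  omega
end

section
/- If J is a zero-sum sequence of length 3n in (ℤ/nℤ)², then J contains a zero-sum subsequence of length n. -/
/-!
Induction on `n`, one prime factor `p` at a time, `n = p * m`, for sequences of any length `t * n`
with `t ≥ 3`. Reducing mod `m` and applying the statement for `m` again and again cuts the
sequence into `t * p - 2` blocks of `m` terms and one block of `2 * m` terms, all with sum `0` mod
`m`. Their sums lie in `m • (ℤ/pm)² ≅ (ℤ/p)²`, so it remains to solve a weighted problem there: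
given `t * p - 2` elements of weight one and one element of weight two with sum `0`, find some of
total weight `p` with sum `0`.

Over `ℤ/p` this follows from two consequences of the Chevalley–Warning polynomial method: among
more than `3 * (p - 1)` elements of `(ℤ/p)²` some nonempty zero-sum subfamily has size divisible
by `p`; and among `4 * p - 2` or `4 * p - 1` elements there is one of size `p` or `3 * p`, since
otherwise the number `N` of zero-sum subfamilies of size `2 * p` would satisfy both `1 + N = 0`
and `2 * N = 0` in `ℤ/p`.
-/

open Finset MvPolynomial

namespace Multiset
variable {α : Type*}

theorem exists_le_card_eq {A : Multiset α} {k : ℕ} (h : k ≤ card A) : ∃ B ≤ A, card B = k := by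
  obtain ⟨B, hB⟩ := card_pos_iff_exists_mem.mp <| by
    rw [card_powersetCard]; exact Nat.choose_pos h
  exact ⟨B, mem_powersetCard.mp hB⟩

theorem join_le_join {S T : Multiset (Multiset α)} (h : S ≤ T) : S.join ≤ T.join := by
  obtain ⟨U, rfl⟩ := le_iff_exists_add.mp h
  rw [join_add]
  exact le_add_right _ _

theorem card_join_of_forall_card_eq {L : Multiset (Multiset α)} {m : ℕ}
    (h : ∀ B ∈ L, card B = m) : card L.join = card L * m := by
  rw [card_join, map_congr rfl h, map_const', sum_replicate, smul_eq_mul]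

theorem sum_map_join {M : Type*} [AddCommMonoid M] (f : α → M) (L : Multiset (Multiset α)) :
    (L.join.map f).sum = (L.map fun B => (B.map f).sum).sum := by
  rw [map_join, sum_join, map_map]
  rfl

variable [DecidableEq α]

theorem exists_le_card_eq_sum_map_eq {M : Type*} [AddCommMonoid M] (A : Multiset α)
    (f : α → M) (T : Finset A.ToType) :
    ∃ S ≤ A, card S = #T ∧ (S.map f).sum = ∑ i ∈ T, f i := by
  refine ⟨T.val.map fun x : A.ToType => (x : α), (map_le_map (Finset.val_le_iff.mpr
    (subset_univ T))).trans_eq (map_univ_coe A), by simp, ?_⟩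
  rw [map_map, ← Finset.sum_map_val]
  rfl

theorem sum_map_tsub_of_le {G : Type*} [AddCommGroup G] (f : α → G) {S T : Multiset α}
    (h : T ≤ S) : ((S - T).map f).sum = (S.map f).sum - (T.map f).sum := by
  rw [eq_sub_iff_add_eq, ← sum_add, ← map_add, tsub_add_cancel_of_le h]

end Multiset

section SupportCount
variable {σ R : Type*} [Fintype σ] [DecidableEq R] [Zero R]

def nonzeroIndices (x : σ → R) : Finset σ := {i | x i ≠ 0}

theorem mem_nonzeroIndices {x : σ → R} {i : σ} : i ∈ nonzeroIndices x ↔ x i ≠ 0 := by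
  simp [nonzeroIndices]

variable [DecidableEq σ] [Fintype R]

theorem card_filter_nonzeroIndices_eq (T : Finset σ) :
    #{x : σ → R | nonzeroIndices x = T} = (Fintype.card R - 1) ^ #T := by
  have hpi : ({x : σ → R | nonzeroIndices x = T} : Finset (σ → R)) =
      Fintype.piFinset fun i => if i ∈ T then {0}ᶜ else {0} := by
    ext x
    simp only [mem_filter, mem_univ, true_and, Fintype.mem_piFinset, Finset.ext_iff,
      mem_nonzeroIndices]
    refine forall_congr' fun i => ?_
    split_ifs with hi <;> simp [hi]
  rw [hpi, Fintype.card_piFinset]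
  simp [apply_ite, card_compl, prod_ite_mem]

theorem sum_comp_nonzeroIndices {M : Type*} [AddCommMonoid M] (g : Finset σ → M) :
    ∑ x : σ → R, g (nonzeroIndices x) = ∑ T, (Fintype.card R - 1) ^ #T • g T := by
  rw [← sum_fiberwise univ (nonzeroIndices (R := R))]
  refine sum_congr rfl fun T _ => ?_
  rw [← card_filter_nonzeroIndices_eq T, ← sum_const]
  exact sum_congr rfl fun x hx => by rw [(mem_filter.mp hx).2]

end SupportCount

theorem MvPolynomial.totalDegree_one_sub_pow_le {R σ : Type*} [CommRing R] {f : MvPolynomial σ R}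
    {d : ℕ} (hf : f.totalDegree ≤ d) (k : ℕ) : (1 - f ^ k).totalDegree ≤ k * d :=
  (totalDegree_sub _ _).trans <| max_le (by simp) <|
    (totalDegree_pow _ _).trans (Nat.mul_le_mul_left k hf)

theorem MvPolynomial.totalDegree_X_pow_le {R σ : Type*} [CommSemiring R] (i : σ) (n : ℕ) :
    (X i ^ n : MvPolynomial σ R).totalDegree ≤ n := by
  simpa [X_pow_eq_monomial] using totalDegree_monomial_le (Finsupp.single i n) (1 : R)

section PolynomialMethod
variable {p : ℕ} {σ : Type*} [Fintype σ]

noncomputable def powSum (c : σ → ZMod p) : MvPolynomial σ (ZMod p) :=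
  ∑ i, C (c i) * X i ^ (p - 1)

theorem totalDegree_powSum_le (c : σ → ZMod p) : (powSum c).totalDegree ≤ p - 1 :=
  totalDegree_finsetSum_le fun i _ =>
    (totalDegree_mul _ _).trans (by simpa using totalDegree_X_pow_le i (p - 1))

noncomputable def choosePoly (k : ℕ) : MvPolynomial σ (ZMod p) :=
  ∑ U ∈ powersetCard k univ, ∏ i ∈ U, X i ^ (p - 1)

theorem totalDegree_choosePoly_le (k : ℕ) :
    (choosePoly k : MvPolynomial σ (ZMod p)).totalDegree ≤ k * (p - 1) := by
  refine totalDegree_finsetSum_le fun U hU => (totalDegree_finsetProd _ _).trans ?_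
  calc ∑ i ∈ U, (X i ^ (p - 1) : MvPolynomial σ (ZMod p)).totalDegree
      ≤ ∑ _i ∈ U, (p - 1) := sum_le_sum fun i _ => totalDegree_X_pow_le i _
    _ = k * (p - 1) := by rw [sum_const, smul_eq_mul, (mem_powersetCard.mp hU).2]

variable [Fact p.Prime]

theorem ZMod.one_sub_pow_card_sub_one (c : ZMod p) :
    1 - c ^ (p - 1) = if c = 0 then 1 else 0 := by
  rw [ZMod.pow_card_sub_one]
  split_ifs <;> simp_all

theorem eval_powSum (c : σ → ZMod p) (x : σ → ZMod p) :
    eval x (powSum c) = ∑ i ∈ nonzeroIndices x, c i := by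
  simp [powSum, ZMod.pow_card_sub_one, nonzeroIndices, sum_filter]

theorem eval_choosePoly (k : ℕ) (x : σ → ZMod p) :
    eval x (choosePoly k) = ((#(nonzeroIndices x)).choose k : ZMod p) := by
  simp only [choosePoly, map_sum, map_prod, map_pow, eval_X, ZMod.pow_card_sub_one, prod_boole]
  rw [sum_boole, ← card_powersetCard]
  congr 2
  ext U
  simp [mem_powersetCard, subset_iff, mem_nonzeroIndices, and_comm]

variable [DecidableEq σ]

theorem sum_neg_one_pow_mul_choose_eq_zero (a : σ → ZMod p × ZMod p) {k : ℕ}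
    (hk : k + 3 * (p - 1) < Fintype.card σ) :
    ∑ T : Finset σ with p ∣ #T ∧ ∑ i ∈ T, a i = 0, (-1) ^ #T * ((#T).choose k : ZMod p) = 0 := by
  have hp := (Fact.out : p.Prime).one_lt
  -- Each factor `1 - f ^ (p - 1)` is the indicator of `f = 0`, so `F x` only depends on the
  -- support of `x`. The degree of `F` is too small for its values to have a nonzero sum, and
  -- every `T` is the support of `(p - 1) ^ #T = (-1) ^ #T` points.
  set F : MvPolynomial σ (ZMod p) := (1 - powSum 1 ^ (p - 1)) *
    (1 - powSum (fun i => (a i).1) ^ (p - 1)) * (1 - powSum (fun i => (a i).2) ^ (p - 1)) *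
    choosePoly k
  have hdeg : F.totalDegree < (Fintype.card (ZMod p) - 1) * Fintype.card σ := by
    have hfactor (c : σ → ZMod p) : (1 - powSum c ^ (p - 1)).totalDegree ≤ (p - 1) * (p - 1) :=
      totalDegree_one_sub_pow_le (totalDegree_powSum_le c) _
    calc F.totalDegree
        ≤ (p - 1) * (p - 1) + (p - 1) * (p - 1) + (p - 1) * (p - 1) + k * (p - 1) :=
          (totalDegree_mul _ _).trans <| add_le_add ((totalDegree_mul _ _).trans <| add_le_add
            ((totalDegree_mul _ _).trans <| add_le_add (hfactor _) (hfactor _)) (hfactor _))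
            (totalDegree_choosePoly_le k)
      _ = (p - 1) * (k + 3 * (p - 1)) := by ring
      _ < (p - 1) * Fintype.card σ := Nat.mul_lt_mul_of_pos_left hk (by omega)
      _ = _ := by rw [ZMod.card]
  let g (T : Finset σ) : ZMod p :=
    if p ∣ #T ∧ ∑ i ∈ T, a i = 0 then ((#T).choose k : ZMod p) else 0
  have heval (x : σ → ZMod p) : eval x F = g (nonzeroIndices x) := by
    simp only [F, g, map_mul, map_sub, map_one, map_pow, eval_powSum, eval_choosePoly,
      ZMod.one_sub_pow_card_sub_one, Prod.ext_iff, Prod.fst_sum, Prod.snd_sum, Prod.fst_zero,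
      Prod.snd_zero, Pi.one_apply, sum_const, nsmul_one, ZMod.natCast_eq_zero_iff]
    split_ifs <;> simp_all
  have hzero : ∑ T, (Fintype.card (ZMod p) - 1) ^ #T • g T = 0 := by
    rw [← sum_comp_nonzeroIndices, ← sum_eval_eq_zero F hdeg]
    exact sum_congr rfl fun x _ => (heval x).symm
  rw [sum_filter]
  refine (sum_congr rfl fun T _ => ?_).trans hzero
  simp only [g, ZMod.card]
  split_ifs <;> simp [nsmul_eq_mul, Nat.cast_sub hp.le]

end PolynomialMethod

theorem ZMod.natCast_choose_two_mul_self (p : ℕ) [Fact p.Prime] :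
    ((2 * p).choose p : ZMod p) = 2 := by
  have hp := (Fact.out : p.Prime).pos
  have hlucas := Choose.choose_modEq_choose_mod_mul_choose_div_nat (n := 2 * p) (k := p) (p := p)
  rw [Nat.mul_mod_left, Nat.mod_self, Nat.mul_div_cancel _ hp, Nat.div_self hp] at hlucas
  simpa using (ZMod.natCast_eq_natCast_iff _ _ _).mpr hlucas

section ZeroSums
variable {p : ℕ} [Fact p.Prime] {σ : Type*} [Fintype σ] [DecidableEq σ]

theorem exists_nonempty_zeroSum_dvd_card (a : σ → ZMod p × ZMod p)
    (h : 3 * (p - 1) < Fintype.card σ) :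
    ∃ T : Finset σ, T.Nonempty ∧ p ∣ #T ∧ ∑ i ∈ T, a i = 0 := by
  by_contra! hne
  have hempty : ({T | p ∣ #T ∧ ∑ i ∈ T, a i = 0} : Finset (Finset σ)) = {∅} := by
    ext T
    simp only [mem_filter, mem_univ, true_and, mem_singleton]
    refine ⟨fun hT => not_nonempty_iff_eq_empty.mp fun hT' => hne T hT' hT.1 hT.2, ?_⟩
    rintro rfl
    simp
  simpa [hempty] using sum_neg_one_pow_mul_choose_eq_zero a (k := 0) (by omega)

theorem exists_zeroSum_card_eq_or_eq_three_mul (a : σ → ZMod p × ZMod p)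
    (h₁ : 4 * p - 3 < Fintype.card σ) (h₂ : Fintype.card σ < 4 * p) :
    ∃ T : Finset σ, (#T = p ∨ #T = 3 * p) ∧ ∑ i ∈ T, a i = 0 := by
  have hp := (Fact.out : p.Prime).two_le
  rcases eq_or_ne p 2 with rfl | hp2
  · obtain ⟨i, j, hij, haij⟩ := Fintype.exists_ne_map_eq_of_card_lt a
      (by simp only [Fintype.card_prod, ZMod.card]; omega)
    refine ⟨{i, j}, Or.inl (card_pair hij), ?_⟩
    rw [sum_pair hij, haij]
    exact CharTwo.add_self_eq_zero _
  by_contra! hno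
  set 𝒢 : Finset (Finset σ) := {T | p ∣ #T ∧ ∑ i ∈ T, a i = 0}
  have hcard : ∀ T ∈ 𝒢.erase ∅, #T = 2 * p := by
    intro T hT
    obtain ⟨hT0, hT⟩ := mem_erase.mp hT
    obtain ⟨hdvd, hsum⟩ := (mem_filter.mp hT).2
    obtain ⟨j, hj⟩ := hdvd
    have : j < 4 := by nlinarith [card_le_univ T]
    have : j ≠ 0 := by rintro rfl; exact hT0 (card_eq_zero.mp hj)
    have : j ≠ 1 := by rintro rfl; exact hno T (Or.inl (by omega)) hsum
    have : j ≠ 3 := by rintro rfl; exact hno T (Or.inr (by omega)) hsum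
    rw [hj]
    interval_cases j <;> omega
  have hrel (k : ℕ) (hk : k + 3 * (p - 1) < Fintype.card σ) :
      ((0 : ℕ).choose k : ZMod p) + #(𝒢.erase ∅) * ((2 * p).choose k : ZMod p) = 0 := by
    have hsum := sum_neg_one_pow_mul_choose_eq_zero a hk
    rw [← add_sum_erase 𝒢 _ (show ∅ ∈ 𝒢 by simp [𝒢]),
      sum_congr rfl fun T hT => by rw [hcard T hT]] at hsum
    simpa [pow_mul] using hsum
  have hk₀ := hrel 0 (by omega)
  have hkp := hrel p (by omega)
  rw [Nat.choose_self, Nat.choose_zero_right] at hk₀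
  rw [ZMod.natCast_choose_two_mul_self, Nat.choose_eq_zero_of_lt (by omega)] at hkp
  have h2 : ((2 : ℕ) : ZMod p) = 0 := by
    push_cast at hk₀ hkp ⊢
    linear_combination 2 * hk₀ - hkp
  exact hp2 ((Nat.prime_dvd_prime_iff_eq Fact.out Nat.prime_two).mp
    ((ZMod.natCast_eq_zero_iff _ _).mp h2))

end ZeroSums

section PrimeCase
variable {p : ℕ} [Fact p.Prime] {α : Type*} [DecidableEq α]

theorem Multiset.exists_zeroSum_le_card_eq_or_eq_two_mul (f : α → ZMod p × ZMod p)
    (A : Multiset α) (hA : 3 * (p - 1) < card A) :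
    ∃ T ≤ A, (card T = p ∨ card T = 2 * p) ∧ (T.map f).sum = 0 := by
  classical
  have hp := (Fact.out : p.Prime).two_le
  obtain ⟨V, hVA, hV⟩ := A.exists_le_card_eq (k := 3 * p - 2) (by omega)
  obtain ⟨T, hT, hdvd, hsum⟩ :=
    exists_nonempty_zeroSum_dvd_card (fun i : V => f i) (by rw [card_coe]; omega)
  obtain ⟨S, hSV, hcard, hS⟩ := V.exists_le_card_eq_sum_map_eq f T
  have hle : #T ≤ 3 * p - 2 := hV ▸ card_coe V ▸ card_le_univ T
  obtain ⟨j, hj⟩ := hdvd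
  have : j < 3 := Nat.lt_of_mul_lt_mul_left ((hj ▸ hle).trans_lt (by omega))
  have : 0 < j := Nat.pos_of_ne_zero (by rintro rfl; simp_all)
  refine ⟨S, hSV.trans hVA, ?_, hS.trans hsum⟩
  rw [hcard, hj]
  interval_cases j <;> simp [mul_comm]

theorem Multiset.exists_zeroSum_le_card_eq_or_eq_three_mul (f : α → ZMod p × ZMod p)
    (A : Multiset α) (h₁ : 4 * p - 3 < card A) (h₂ : card A < 4 * p) :
    ∃ T ≤ A, (card T = p ∨ card T = 3 * p) ∧ (T.map f).sum = 0 := by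
  classical
  obtain ⟨T, hT, hsum⟩ := exists_zeroSum_card_eq_or_eq_three_mul (fun i : A => f i)
    (by rwa [card_coe]) (by rwa [card_coe])
  obtain ⟨S, hSA, hcard, hS⟩ := A.exists_le_card_eq_sum_map_eq f T
  exact ⟨S, hSA, hcard ▸ hT, hS.trans hsum⟩

theorem exists_zeroSum_le_of_card_add_two_eq_mul (f : α → ZMod p × ZMod p)
    (d : ZMod p × ZMod p) {t : ℕ} (ht : 3 ≤ t) {S : Multiset α}
    (hS : Multiset.card S + 2 = t * p) (hsum : (S.map f).sum + d = 0) :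
    ∃ s ≤ S, (Multiset.card s = p ∧ (s.map f).sum = 0) ∨
      (Multiset.card s + 2 = p ∧ (s.map f).sum + d = 0) := by
  have hp := (Fact.out : p.Prime).two_le
  induction t using Nat.strong_induction_on generalizing S with
  | _ t ih =>
  have hcompl {T : Multiset α} (hTS : T ≤ S) (hT : (T.map f).sum = 0) :
      ((S - T).map f).sum + d = 0 ∧ Multiset.card (S - T) + Multiset.card T = Multiset.card S := by
    rw [Multiset.sum_map_tsub_of_le f hTS, hT, sub_zero, Multiset.card_sub hTS,
      Nat.sub_add_cancel (Multiset.card_le_card hTS)]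
    exact ⟨hsum, rfl⟩
  obtain rfl | rfl | ht5 : t = 3 ∨ t = 4 ∨ 5 ≤ t := by omega
  · obtain ⟨T, hTS, hcard | hcard, hT⟩ :=
      S.exists_zeroSum_le_card_eq_or_eq_two_mul f (by omega)
    · exact ⟨T, hTS, Or.inl ⟨hcard, hT⟩⟩
    · obtain ⟨hsum', hcard'⟩ := hcompl hTS hT
      exact ⟨S - T, tsub_le_self, Or.inr ⟨by omega, hsum'⟩⟩
  · obtain ⟨T, hTS, hcard | hcard, hT⟩ :=
      S.exists_zeroSum_le_card_eq_or_eq_three_mul f (by omega) (by omega)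
    · exact ⟨T, hTS, Or.inl ⟨hcard, hT⟩⟩
    · obtain ⟨hsum', hcard'⟩ := hcompl hTS hT
      exact ⟨S - T, tsub_le_self, Or.inr ⟨by omega, hsum'⟩⟩
  · have h5p : 5 * p ≤ t * p := Nat.mul_le_mul_right p ht5
    obtain ⟨T, hTS, hcard | hcard, hT⟩ :=
      S.exists_zeroSum_le_card_eq_or_eq_two_mul f (by omega)
    · exact ⟨T, hTS, Or.inl ⟨hcard, hT⟩⟩
    · obtain ⟨hsum', hcard'⟩ := hcompl hTS hT
      obtain ⟨s, hs, h⟩ := ih (t - 2) (by omega) (by omega)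
        (by rw [Nat.sub_mul]; omega) hsum'
      exact ⟨s, hs.trans tsub_le_self, h⟩

end PrimeCase

def ZMod.scaleHom (p m : ℕ) : ZMod p →+ ZMod (p * m) :=
  ZMod.lift p ⟨zmultiplesHom _ (m : ZMod (p * m)), by simp [← Nat.cast_mul]⟩

theorem ZMod.scaleHom_intCast {p m : ℕ} (x : ℤ) : scaleHom p m x = x * m := by
  simp [scaleHom, ZMod.lift_coe]

theorem ZMod.scaleHom_injective {p m : ℕ} (hm : m ≠ 0) : Function.Injective (scaleHom p m) := by
  refine (injective_iff_map_eq_zero _).mpr fun x hx => ?_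
  obtain ⟨x, rfl⟩ := ZMod.intCast_surjective x
  rw [scaleHom_intCast, ← Int.cast_natCast, ← Int.cast_mul, ZMod.intCast_zmod_eq_zero_iff_dvd,
    Nat.cast_mul] at hx
  rw [ZMod.intCast_zmod_eq_zero_iff_dvd]
  exact Int.dvd_of_mul_dvd_mul_right (by exact_mod_cast hm) hx

theorem ZMod.exists_scaleHom_eq {p m : ℕ} {x : ZMod (p * m)}
    (hx : ZMod.castHom (dvd_mul_left m p) (ZMod m) x = 0) : ∃ c, scaleHom p m c = x := by
  obtain ⟨x, rfl⟩ := ZMod.intCast_surjective x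
  rw [map_intCast, ZMod.intCast_zmod_eq_zero_iff_dvd] at hx
  obtain ⟨c, rfl⟩ := hx
  exact ⟨c, by rw [scaleHom_intCast]; push_cast; ring⟩

/-- A sequence is given by a multiset of labels `A` and their values `f`, so that the property
applies to sequences of blocks. -/
def ZeroSumProperty (n : ℕ) : Prop :=
  ∀ {α : Type} (f : α → ZMod n × ZMod n) {t : ℕ}, 3 ≤ t → ∀ {A : Multiset α},
    Multiset.card A = t * n → (A.map f).sum = 0 →
      ∃ S ≤ A, Multiset.card S = n ∧ (S.map f).sum = 0

theorem zeroSumProperty_zero : ZeroSumProperty 0 := by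
  intro α f t _ A hA _
  exact ⟨0, Multiset.zero_le A, by simp, by simp⟩

theorem zeroSumProperty_one : ZeroSumProperty 1 := by
  intro α f t ht A hA _
  obtain ⟨S, hSA, hS⟩ := A.exists_le_card_eq (k := 1) (by omega)
  exact ⟨S, hSA, hS, Subsingleton.elim _ _⟩

theorem ZeroSumProperty.exists_blocks {m : ℕ} (hm : ZeroSumProperty m) {α : Type}
    [DecidableEq α] (g : α → ZMod m × ZMod m) (k : ℕ) {R : Multiset α}
    (hR : Multiset.card R = (k + 2) * m) (hsum : (R.map g).sum = 0) :
    ∃ L : Multiset (Multiset α), Multiset.card L = k ∧ L.join ≤ R ∧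
      (∀ B ∈ L, Multiset.card B = m ∧ (B.map g).sum = 0) ∧
      Multiset.card (R - L.join) = 2 * m ∧ ((R - L.join).map g).sum = 0 := by
  induction k generalizing R with
  | zero => exact ⟨0, rfl, by simp, by simp, by simpa using hR, by simpa using hsum⟩
  | succ k ih =>
    obtain ⟨B, hBR, hB, hBsum⟩ := hm g (t := k + 3) (by omega) (hR.trans (by ring)) hsum
    obtain ⟨L, hL, hLR, hLB, hrest⟩ := ih (R := R - B)
      (by rw [Multiset.card_sub hBR, hR, hB, add_right_comm, add_mul, one_mul,
        Nat.add_sub_cancel])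
      (by rw [Multiset.sum_map_tsub_of_le g hBR, hsum, hBsum, sub_zero])
    refine ⟨B ::ₘ L, by simp [hL], ?_, ?_, ?_⟩
    · rw [Multiset.join_cons]
      exact (add_le_add le_rfl hLR).trans_eq (add_tsub_cancel_of_le hBR)
    · simpa [Multiset.forall_mem_cons] using ⟨⟨hB, hBsum⟩, hLB⟩
    · rwa [Multiset.join_cons, ← tsub_tsub]

theorem exists_zeroSum_le_of_blocks {p m : ℕ} [Fact p.Prime] {α G : Type*} [DecidableEq α]
    [AddCommGroup G] (Φ : ZMod p × ZMod p →+ G) (hΦ : Function.Injective Φ) (f : α → G)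
    {t : ℕ} (ht : 3 ≤ t) {L : Multiset (Multiset α)} (hL : Multiset.card L + 2 = t * p)
    (hLB : ∀ B ∈ L, Multiset.card B = m ∧ (B.map f).sum ∈ Φ.range) {R : Multiset α}
    (hR : Multiset.card R = 2 * m) (hRΦ : (R.map f).sum ∈ Φ.range)
    (hsum : (L.join.map f).sum + (R.map f).sum = 0) :
    ∃ S ≤ L.join + R, Multiset.card S = p * m ∧ (S.map f).sum = 0 := by
  let c := Function.invFun Φ
  have hc {x : G} (hx : x ∈ Φ.range) : Φ (c x) = x := Function.invFun_eq hx
  have hsub {L'} (hL' : L' ≤ L) :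
      Φ (L'.map fun B => c (B.map f).sum).sum = (L'.join.map f).sum ∧
        Multiset.card L'.join = Multiset.card L' * m := by
    have hB {B} (hB : B ∈ L') := hLB B (Multiset.mem_of_le hL' hB)
    refine ⟨?_, Multiset.card_join_of_forall_card_eq fun B hB' => (hB hB').1⟩
    rw [map_multiset_sum, Multiset.map_map, Multiset.sum_map_join]
    exact congrArg _ (Multiset.map_congr rfl fun B hB' => hc (hB hB').2)
  obtain ⟨s, hsL, ⟨hs, hs0⟩ | ⟨hs, hs0⟩⟩ := exists_zeroSum_le_of_card_add_two_eq_mul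
    (fun B => c (B.map f).sum) (c (R.map f).sum) ht hL
    (hΦ <| by rw [map_add, (hsub le_rfl).1, hc hRΦ, hsum, map_zero])
  · refine ⟨s.join, (Multiset.join_le_join hsL).trans (Multiset.le_add_right _ _), ?_, ?_⟩
    · rw [(hsub hsL).2, hs]
    · rw [← (hsub hsL).1, hs0, map_zero]
  · refine ⟨s.join + R, add_le_add (Multiset.join_le_join hsL) le_rfl, ?_, ?_⟩
    · rw [Multiset.card_add, (hsub hsL).2, hR, ← hs, add_mul]
    · rw [Multiset.map_add, Multiset.sum_add, ← (hsub hsL).1, ← hc hRΦ, ← map_add, hs0,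
        map_zero]

theorem zeroSumProperty_prime_mul {p m : ℕ} (hp : p.Prime) (hm : ZeroSumProperty m) :
    ZeroSumProperty (p * m) := by
  rcases Nat.eq_zero_or_pos m with rfl | hm0
  · rw [mul_zero]
    exact zeroSumProperty_zero
  have := Fact.mk hp
  classical
  intro α f t ht A hA hsum
  let π : ZMod (p * m) →+ ZMod m := (ZMod.castHom (dvd_mul_left m p) (ZMod m)).toAddMonoidHom
  let Φ := (ZMod.scaleHom p m).prodMap (ZMod.scaleHom p m)
  have hΦ : Function.Injective Φ :=
    (ZMod.scaleHom_injective hm0.ne').prodMap (ZMod.scaleHom_injective hm0.ne')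
  have hrange {x} (hx : π.prodMap π x = 0) : x ∈ Φ.range := by
    obtain ⟨c₁, hc₁⟩ := ZMod.exists_scaleHom_eq (congrArg Prod.fst hx)
    obtain ⟨c₂, hc₂⟩ := ZMod.exists_scaleHom_eq (congrArg Prod.snd hx)
    exact ⟨(c₁, c₂), Prod.ext hc₁ hc₂⟩
  have htp : 3 ≤ t * p := le_mul_of_le_of_one_le ht hp.one_le
  obtain ⟨L, hL, hLA, hLB, hRcard, hRsum⟩ :=
    hm.exists_blocks (π.prodMap π ∘ f) (t * p - 2) (R := A)
      (by rw [hA, Nat.sub_add_cancel (by omega), mul_assoc])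
      (by rw [← Multiset.map_map, ← map_multiset_sum, hsum, map_zero])
  have hsplit : (L.join.map f).sum + ((A - L.join).map f).sum = 0 := by
    rw [← Multiset.sum_add, ← Multiset.map_add, add_tsub_cancel_of_le hLA, hsum]
  obtain ⟨S, hS, hSsum⟩ := exists_zeroSum_le_of_blocks Φ hΦ f ht (by omega)
    (fun B hB => ⟨(hLB B hB).1, hrange <| by rw [map_multiset_sum, Multiset.map_map, (hLB B hB).2]⟩)
    hRcard (hrange <| by rw [map_multiset_sum, Multiset.map_map, hRsum]) hsplit
  rw [add_tsub_cancel_of_le hLA] at hS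
  exact ⟨S, hS, hSsum⟩

theorem zeroSumProperty : ∀ n, ZeroSumProperty n :=
  induction_on_primes zeroSumProperty_zero zeroSumProperty_one fun _ _ =>
    zeroSumProperty_prime_mul

theorem three_n_general (n : ℕ) (J : Multiset (ZMod n × ZMod n))
    (hJ : Multiset.card J = 3 * n) (hsum : J.sum = 0) :
    ∃ S ≤ J, Multiset.card S = n ∧ S.sum = 0 := by
  simpa using zeroSumProperty n id le_rfl hJ (by simpa using hsum)

theorem three_n (n : ℕ) (hn : 0 < n) (J : Multiset (ZMod n × ZMod n))
    (hJ : Multiset.card J = 3 * n) (hsum : J.sum = 0) :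
    ∃ S ≤ J, Multiset.card S = n ∧ S.sum = 0 :=
  three_n_general n J hJ hsum
end

section
/- For all positive integers n and d, every sequence of (n-1)n^d + 1 elements in (ℤ/nℤ)^d contains a zero-sum subsequence of length n. -/
theorem harborth_upper (n d : ℕ) (hn : 0 < n) (hd : 0 < d)
    (J : Multiset (Fin d → ZMod n)) (hJ : Multiset.card J = (n - 1) * n ^ d + 1) :
    ∃ S ≤ J, Multiset.card S = n ∧ S.sum = 0 := by
  haveI : NeZero n := ⟨hn.ne'⟩
  obtain ⟨a, ha⟩ : ∃ a, n ≤ J.count a := by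
    by_contra hc
    push_neg at hc
    have h1 : Multiset.card J = ∑ x ∈ J.toFinset, J.count x :=
      (Multiset.toFinset_sum_count_eq J).symm
    have h2 : ∑ x ∈ J.toFinset, J.count x ≤ ∑ _x : Fin d → ZMod n, (n - 1) := by
      calc ∑ x ∈ J.toFinset, J.count x
          ≤ ∑ x : Fin d → ZMod n, J.count x :=
            Finset.sum_le_sum_of_subset_of_nonneg (Finset.subset_univ _)
              (fun _ _ _ => Nat.zero_le _)
        _ ≤ ∑ _x : Fin d → ZMod n, (n - 1) :=
            Finset.sum_le_sum fun x _ => Nat.le_sub_one_of_lt (hc x)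
    have h3 : ∑ _x : Fin d → ZMod n, (n - 1) = (n - 1) * n ^ d := by
      rw [Finset.sum_const, smul_eq_mul, mul_comm]
      congr 1
      simp [Fintype.card_fun, ZMod.card]
    omega
  refine ⟨Multiset.replicate n a, ?_, Multiset.card_replicate _ _, ?_⟩
  · rw [Multiset.le_iff_count]
    intro b
    rw [Multiset.count_replicate]
    split <;> simp_all
  · rw [Multiset.sum_replicate]
    funext i
    simp [nsmul_eq_mul]
end

section
/- For all positive integers n and d, there exists a sequence of (n-1)·2^d elements in (ℤ/nℤ)^d with no zero-sum subsequence of length n. -/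
/-!
Take every 0-1 vector of `(ℤ/nℤ)^d` with multiplicity `n - 1`. If `n` of these summed to zero,
then in each coordinate the number of ones would be a multiple of `n` between `0` and `n`, so
the `n` vectors would agree in every coordinate; but no vector occurs `n` times.
-/

open Function

namespace Multiset

lemma sum_eq_count_one_of_forall_le_one {s : Multiset ℕ} (hs : ∀ a ∈ s, a ≤ 1) :
    s.sum = s.count 1 := by
  induction s using Multiset.induction with
  | empty => simp
  | cons a s ih =>
    have ha : a ≤ 1 := hs a (mem_cons_self a s)
    rw [sum_cons, count_cons, ih fun b hb => hs b (mem_cons_of_mem hb)]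
    interval_cases a <;> simp [add_comm]

lemma eq_replicate_of_forall_le_one_of_card_dvd_sum {s : Multiset ℕ} (hs : ∀ a ∈ s, a ≤ 1)
    (hdvd : card s ∣ s.sum) : ∃ b, s = replicate (card s) b := by
  rw [sum_eq_count_one_of_forall_le_one hs] at hdvd
  rcases Nat.eq_zero_or_pos (s.count 1) with hzero | hpos
  · refine ⟨0, eq_replicate_card.2 fun a ha => ?_⟩
    have : a ≠ 1 := fun h => count_eq_zero.1 hzero (h ▸ ha)
    have := hs a ha
    omega
  · have hfull : s.count 1 = card s := (count_le_card 1 s).antisymm (Nat.le_of_dvd hpos hdvd)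
    exact ⟨1, eq_replicate_card.2 fun a ha => (count_eq_card.1 hfull a ha).symm⟩

lemma count_nsmul_val_le {α : Type*} [DecidableEq α] (T : Finset α) (k : ℕ) (a : α) :
    count a (k • T.val) ≤ k := by
  rw [count_nsmul]
  exact (Nat.mul_le_mul_left k (nodup_iff_count_le_one.1 T.nodup a)).trans_eq (mul_one k)

end Multiset

namespace ZMod

open Multiset

lemma exists_eq_replicate_of_sum_eq_zero {ι : Type*} {n : ℕ} [NeZero n]
    {S : Multiset (ι → ZMod n)} (hS : ∀ x ∈ S, ∀ i, (x i).val ≤ 1) (hcard : Multiset.card S = n)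
    (hsum : S.sum = 0) : ∃ y, S = replicate n y := by
  have hcoord (i : ι) : ∃ b, S.map (fun x => (x i).val) = replicate n b := by
    have hdvd : n ∣ (S.map fun x => (x i).val).sum := by
      rw [← ZMod.natCast_eq_zero_iff, Nat.cast_multiset_sum, Multiset.map_map]
      simp only [comp_def, natCast_zmod_val, ← Pi.multiset_sum_apply, hsum, Pi.zero_apply]
    have h01 : ∀ a ∈ S.map (fun x => (x i).val), a ≤ 1 := by
      simpa using fun x hx => hS x hx i
    simpa [hcard] using
      eq_replicate_of_forall_le_one_of_card_dvd_sum h01 (by rwa [Multiset.card_map, hcard])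
  choose b hb using hcoord
  refine ⟨fun i => b i, eq_replicate.2 ⟨hcard, fun x hx => funext fun i => ?_⟩⟩
  have : (x i).val = b i := eq_of_mem_replicate (hb i ▸ mem_map_of_mem _ hx)
  rw [← this, natCast_zmod_val]

end ZMod

def zeroOneVector (n : ℕ) {ι : Type*} (v : ι → Fin 2) : ι → ZMod n :=
  fun i => ((v i : ℕ) : ZMod n)

lemma val_zeroOneVector_le_one {n : ℕ} {ι : Type*} (v : ι → Fin 2) (i : ι) :
    (zeroOneVector n v i).val ≤ 1 := by
  rw [zeroOneVector, ZMod.val_natCast]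
  exact (Nat.mod_le _ _).trans (Nat.le_of_lt_succ (v i).2)

lemma zeroOneVector_injective {n : ℕ} {ι : Type*} (hn : 1 < n) :
    Injective (zeroOneVector n (ι := ι)) := by
  intro u v huv
  funext i
  have := congrArg ZMod.val (congrFun huv i)
  simp only [zeroOneVector, ZMod.val_natCast] at this
  rwa [Nat.mod_eq_of_lt (by omega), Nat.mod_eq_of_lt (by omega), Fin.val_inj] at this

theorem harborth_lower_general (n d : ℕ) (hn : 0 < n) :
    ∃ J : Multiset (Fin d → ZMod n), Multiset.card J = (n - 1) * 2 ^ d ∧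
      ¬ ∃ S ≤ J, Multiset.card S = n ∧ S.sum = 0 := by
  classical
  obtain rfl | hn1 : n = 1 ∨ 1 < n := by omega
  · exact ⟨0, by simp, fun ⟨S, hS, hcard, _⟩ => by simp_all⟩
  have : NeZero n := ⟨hn.ne'⟩
  set T := Finset.univ.image (zeroOneVector n (ι := Fin d))
  refine ⟨(n - 1) • T.val, ?_, ?_⟩
  · rw [Multiset.card_nsmul, Finset.card_val,
      Finset.card_image_of_injective _ (zeroOneVector_injective hn1)]
    simp
  rintro ⟨S, hSJ, hcard, hsum⟩
  have hS : ∀ x ∈ S, ∀ i, (x i).val ≤ 1 := by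
    intro x hx i
    obtain ⟨v, -, rfl⟩ :=
      Finset.mem_image.1 (Multiset.mem_of_mem_nsmul (Multiset.mem_of_le hSJ hx))
    exact val_zeroOneVector_le_one v i
  obtain ⟨y, rfl⟩ := ZMod.exists_eq_replicate_of_sum_eq_zero hS hcard hsum
  have hcount := (Multiset.count_le_of_le y hSJ).trans (Multiset.count_nsmul_val_le T (n - 1) y)
  rw [Multiset.count_replicate_self] at hcount
  omega

theorem harborth_lower (n d : ℕ) (hn : 0 < n) (hd : 0 < d) :
    ∃ J : Multiset (Fin d → ZMod n), Multiset.card J = (n - 1) * 2 ^ d ∧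
      ¬ ∃ S ≤ J, Multiset.card S = n ∧ S.sum = 0 :=
  harborth_lower_general n d hn
end

section
/- A sequence in (ℤ/nℤ)² consisting of the elements (0,0), (0,1), (1,0), (1,1) with multiplicities a, b, c, d respectively, where each of a, b, c, d is at most n-1, contains no zero-sum subsequence of length n. -/
/-! A subsequence `S` splits as `a'`, `b'`, `c'`, `d'` copies of the four elements, each count
below `n`. Its coordinate sums are `c' + d'` and `b' + d'`, so a zero sum forces both to be `0`
or `n`, which no choice of counts summing to `n` achieves. -/

theorem Multiset.exists_eq_add_of_le_add {α : Type*} [DecidableEq α] {s t u : Multiset α}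
    (h : s ≤ t + u) : ∃ t' ≤ t, ∃ u' ≤ u, s = t' + u' :=
  ⟨s ∩ t, Multiset.inter_le_right, s - t, Multiset.sub_le_iff_le_add'.2 h,
    by rw [add_comm, Multiset.sub_add_inter]⟩

theorem Multiset.exists_eq_add_replicate_of_le_add_replicate {α : Type*} {s t : Multiset α}
    {k : ℕ} {x : α} (h : s ≤ t + Multiset.replicate k x) :
    ∃ t' ≤ t, ∃ k' ≤ k, s = t' + Multiset.replicate k' x := by
  classical
  obtain ⟨t', ht', u', hu', rfl⟩ := Multiset.exists_eq_add_of_le_add h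
  obtain ⟨k', hk', rfl⟩ := Multiset.le_replicate_iff.1 hu'
  exact ⟨t', ht', k', hk', rfl⟩

theorem sum_replicate_unit_square {R : Type*} [AddCommMonoidWithOne R] (a b c d : ℕ) :
    (Multiset.replicate a ((0 : R), (0 : R)) + Multiset.replicate b (0, 1) +
      Multiset.replicate c (1, 0) + Multiset.replicate d (1, 1)).sum =
      (((c + d : ℕ) : R), ((b + d : ℕ) : R)) := by
  simp [Multiset.sum_replicate, add_comm]

theorem Nat.eq_zero_or_eq_of_dvd_of_lt_two_mul {m n : ℕ} (hdvd : n ∣ m) (hlt : m < 2 * n) :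
    m = 0 ∨ m = n :=
  (eq_or_ne m 0).imp_right fun hm => Nat.eq_of_dvd_of_lt_two_mul hm hdvd hlt

theorem Nat.not_dvd_and_dvd_of_add_eq {n a b c d : ℕ} (ha : a < n) (hb : b < n) (hc : c < n)
    (hd : d < n) (hsum : a + b + c + d = n) : ¬ (n ∣ c + d ∧ n ∣ b + d) := by
  rintro ⟨hcd, hbd⟩
  rcases Nat.eq_zero_or_eq_of_dvd_of_lt_two_mul hcd (by omega) with h | h <;>
  rcases Nat.eq_zero_or_eq_of_dvd_of_lt_two_mul hbd (by omega) with h' | h' <;> omega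

theorem square_basic_construction (n a b c d : ℕ) (hn : 0 < n)
    (ha : a ≤ n - 1) (hb : b ≤ n - 1) (hc : c ≤ n - 1) (hd : d ≤ n - 1) :
    ¬ ∃ S ≤ Multiset.replicate a ((0 : ZMod n), (0 : ZMod n)) +
          Multiset.replicate b ((0 : ZMod n), (1 : ZMod n)) +
          Multiset.replicate c ((1 : ZMod n), (0 : ZMod n)) +
          Multiset.replicate d ((1 : ZMod n), (1 : ZMod n)),
        Multiset.card S = n ∧ S.sum = 0 := by
  rintro ⟨S, hS, hcard, hsum⟩
  obtain ⟨S₃, hS₃, d', hd', rfl⟩ := Multiset.exists_eq_add_replicate_of_le_add_replicate hS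
  obtain ⟨S₂, hS₂, c', hc', rfl⟩ := Multiset.exists_eq_add_replicate_of_le_add_replicate hS₃
  obtain ⟨S₁, hS₁, b', hb', rfl⟩ := Multiset.exists_eq_add_replicate_of_le_add_replicate hS₂
  obtain ⟨a', ha', rfl⟩ := Multiset.le_replicate_iff.1 hS₁
  simp only [Multiset.card_add, Multiset.card_replicate] at hcard
  rw [sum_replicate_unit_square, Prod.mk_eq_zero, ZMod.natCast_eq_zero_iff,
    ZMod.natCast_eq_zero_iff] at hsum
  exact Nat.not_dvd_and_dvd_of_add_eq (by omega) (by omega) (by omega) (by omega) hcard hsum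
end

section
/- For n = 2^k, every sequence of (n-1)·2^d + 1 elements in (ℤ/nℤ)^d contains a zero-sum subsequence of length n. -/
/-!
Induction on `k`. Given `(2m - 1)·2^d + 1` vectors over `ℤ/2mℤ`, pigeonholing on their parity
vectors in `(ℤ/2ℤ)^d` repeatedly extracts `(m - 1)·2^d + 1` disjoint pairs with equal parities.
The sum of each such pair is twice a vector of `(ℤ/mℤ)^d`; by induction `m` of these halves have
zero sum, and the `2m` vectors of the corresponding pairs then have zero sum in `(ℤ/2mℤ)^d`.
-/

open Multiset

theorem Multiset.exists_pair_le_of_card_lt {α β : Type*} [Fintype β] (f : α → β)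
    {J : Multiset α} (h : Fintype.card β < card J) :
    ∃ a b, f a = f b ∧ ({a, b} : Multiset α) ≤ J := by
  have hdup : ¬ (J.map f).Nodup := fun hnd =>
    (Finset.card_le_univ ⟨J.map f, hnd⟩).not_gt (by simpa using h)
  obtain ⟨v, t, hv⟩ : ∃ v t, J.map f = v ::ₘ v ::ₘ t := by
    simpa [nodup_iff_ne_cons_cons] using hdup
  obtain ⟨u, hu, hmap⟩ : ∃ u ≤ J, u.map f = {v, v} :=
    exists_le_map_eq_of_le_map (hv ▸ cons_le_cons v (cons_le_cons v (zero_le t)))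
  obtain ⟨a, b, rfl⟩ := card_eq_two.mp (by simpa using congrArg card hmap)
  have hfv : ∀ x ∈ ({a, b} : Multiset α), f x = v := fun x hx => by
    have hfx := mem_map_of_mem f hx
    rw [hmap] at hfx
    simpa using hfx
  exact ⟨a, b, (hfv a (by simp)).trans (hfv b (by simp)).symm, hu⟩

theorem Multiset.exists_pairs_of_card {α β : Type*} [Fintype β] (f : α → β) (t : ℕ)
    (J : Multiset α) (hJ : 2 * t + Fintype.card β ≤ card J + 1) :
    ∃ P : Multiset (α × α), card P = t ∧ (∀ p ∈ P, f p.1 = f p.2) ∧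
      P.bind (fun p => {p.1, p.2}) ≤ J := by
  induction t generalizing J with
  | zero => exact ⟨0, rfl, by simp, by simp⟩
  | succ t ih =>
    obtain ⟨a, b, hab, hle⟩ := exists_pair_le_of_card_lt f (J := J) (by omega)
    obtain ⟨J, rfl⟩ := exists_add_of_le hle
    obtain ⟨P, hcard, heq, hP⟩ := ih J (by
      simp only [insert_eq_cons, cons_add, singleton_add, card_cons] at hJ
      omega)
    refine ⟨(a, b) ::ₘ P, by simp [hcard], ?_, ?_⟩
    · simpa [hab] using heq
    · rw [cons_bind]
      exact add_le_add_right hP _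

theorem exists_zero_sum_two_mul_of_halving {G H β : Type*} [AddCommMonoid G]
    [AddCommMonoid H] [Fintype β] (f : G → β) (ι : H →+ G)
    (hpair : ∀ x y, f x = f y → ∃ h, ι h = x + y) {s n : ℕ}
    (hH : ∀ J : Multiset H, card J = s → ∃ S ≤ J, card S = n ∧ S.sum = 0)
    (J : Multiset G) (hJ : 2 * s + Fintype.card β ≤ card J + 1) :
    ∃ S ≤ J, card S = 2 * n ∧ S.sum = 0 := by
  choose! half hhalf using hpair
  obtain ⟨P, hcard, hfP, hPJ⟩ := exists_pairs_of_card f s J hJ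
  obtain ⟨S, hSP, hScard, hSsum⟩ := hH (P.map fun p => half p.1 p.2) (by simp [hcard])
  obtain ⟨Q, hQP, rfl⟩ := exists_le_map_eq_of_le_map hSP
  obtain ⟨R, rfl⟩ := exists_add_of_le hQP
  rw [add_bind] at hPJ
  refine ⟨Q.bind fun p => {p.1, p.2}, le_self_add.trans hPJ, ?_, ?_⟩
  · rw [card_map] at hScard
    simp [hScard, two_mul]
  · have hQ : Q.map (fun p => p.1 + p.2) = (Q.map fun p => half p.1 p.2).map ι := by
      rw [map_map]
      exact map_congr rfl fun p hp => (hhalf _ _ (hfP p (mem_add.mpr (Or.inl hp)))).symm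
    calc (Q.bind fun p => {p.1, p.2}).sum = (Q.map fun p => p.1 + p.2).sum := by simp
      _ = 0 := by rw [hQ, ← map_multiset_sum, hSsum, _root_.map_zero]

namespace ZMod

def doubleHom (m : ℕ) : ZMod m →+ ZMod (2 * m) :=
  lift m ⟨zmultiplesHom _ 2, by simpa [mul_comm] using natCast_self (2 * m)⟩

theorem doubleHom_natCast (m c : ℕ) : doubleHom m c = 2 * c := by
  simpa [doubleHom, mul_comm] using lift_coe m ⟨zmultiplesHom (ZMod (2 * m)) 2, _⟩ (c : ℤ)

theorem exists_doubleHom_eq_add (m : ℕ) [NeZero m] {x y : ZMod (2 * m)}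
    (h : (x.val : ZMod 2) = y.val) : ∃ z, doubleHom m z = x + y := by
  obtain ⟨c, hc⟩ : ∃ c, x.val + y.val = 2 * c :=
    ⟨(x.val + y.val) / 2, by have := (natCast_eq_natCast_iff' _ _ 2).mp h; omega⟩
  refine ⟨c, ?_⟩
  calc doubleHom m c = ((x.val + y.val : ℕ) : ZMod (2 * m)) := by
        rw [doubleHom_natCast, hc, Nat.cast_mul, Nat.cast_ofNat]
    _ = x + y := by rw [Nat.cast_add, natCast_zmod_val, natCast_zmod_val]

theorem exists_doubleHom_compLeft_eq_add {ι : Type*} (m : ℕ) [NeZero m]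
    {x y : ι → ZMod (2 * m)}
    (h : (fun i => ((x i).val : ZMod 2)) = fun i => ((y i).val : ZMod 2)) :
    ∃ z, (doubleHom m).compLeft ι z = x + y := by
  choose z hz using fun i => exists_doubleHom_eq_add m (congrFun h i)
  exact ⟨z, funext hz⟩

end ZMod

theorem exists_zero_sum_two_mul_zmod {ι : Type*} [Fintype ι] [DecidableEq ι] (m : ℕ)
    [NeZero m]
    (hm : ∀ J : Multiset (ι → ZMod m), card J = (m - 1) * 2 ^ Fintype.card ι + 1 →
      ∃ S ≤ J, card S = m ∧ S.sum = 0)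
    (J : Multiset (ι → ZMod (2 * m))) (hJ : card J = (2 * m - 1) * 2 ^ Fintype.card ι + 1) :
    ∃ S ≤ J, card S = 2 * m ∧ S.sum = 0 := by
  refine exists_zero_sum_two_mul_of_halving (fun x i => ((x i).val : ZMod 2))
    ((ZMod.doubleHom m).compLeft ι) (fun _ _ => ZMod.exists_doubleHom_compLeft_eq_add m) hm J ?_
  obtain ⟨m, rfl⟩ := Nat.exists_eq_add_one_of_ne_zero (NeZero.ne m)
  rw [hJ, Fintype.card_fun, ZMod.card, show 2 * (m + 1) - 1 = 2 * m + 1 by omega]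
  simp only [add_tsub_cancel_right]
  exact le_of_eq (by ring)

theorem harborth_power_of_two_general (k d : ℕ)
    (J : Multiset (Fin d → ZMod (2 ^ k)))
    (hJ : Multiset.card J = (2 ^ k - 1) * 2 ^ d + 1) :
    ∃ S ≤ J, Multiset.card S = 2 ^ k ∧ S.sum = 0 := by
  induction k with
  | zero =>
    obtain ⟨a, rfl⟩ := card_eq_one.mp (by simpa using hJ)
    exact ⟨{a}, le_rfl, rfl, funext fun _ => Subsingleton.elim (α := ZMod 1) _ _⟩
  | succ k ih =>
    revert J
    rw [pow_succ']
    simpa using exists_zero_sum_two_mul_zmod (ι := Fin d) (2 ^ k) (by simpa using ih)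

theorem harborth_power_of_two (k d : ℕ) (hd : 0 < d)
    (J : Multiset (Fin d → ZMod (2 ^ k)))
    (hJ : Multiset.card J = (2 ^ k - 1) * 2 ^ d + 1) :
    ∃ S ≤ J, Multiset.card S = 2 ^ k ∧ S.sum = 0 :=
  harborth_power_of_two_general k d J hJ
end
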